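/- arXiv:1403.7533 — 3 statements merged into one kernel-verified Lean document; each statement's English description precedes it below -/
import Mathlib

section
/- Let v = (a,b) be a unit vector in ℝ² with a > 0 and b > 0, and let v⊥ = (-b,a). Define a sequence of vectors n_i ∈ {(1,0),(0,1)} recursively: having chosen n_0,…,n_{i-1}, set S_i = n_0 + ⋯ + n_{i-1} (with S_0 = 0), and let n_i = (1,0) if |⟨v⊥, S_i + (1,0)⟩| ≤ |⟨v⊥, S_i + (0,1)⟩|, and n_i = (0,1) otherwise. Then for every i ≥ 0, |⟨v⊥, S_i⟩| ≤ 1. -/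
open scoped RealInnerProductSpace

/-- For the greedy sequence of steps `nᵢ ∈ {(1,0),(0,1)}` chosen to minimize
`|⟨v⊥, Sᵢ + step⟩|`, the partial sums `Sᵢ` stay at distance at most `1` from the line
through the origin with direction `v = (a,b)`. -/
theorem greedy_partial_sums_close_to_line
    (a b : ℝ) (ha : 0 < a) (hb : 0 < b) (hab : a ^ 2 + b ^ 2 = 1)
    (v vperp e1 e2 : EuclideanSpace ℝ (Fin 2))
    (hv : v = ![a, b]) (hvperp : vperp = ![-b, a])
    (he1 : e1 = !₂[1, 0]) (he2 : e2 = !₂[0, 1])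
    (S : ℕ → EuclideanSpace ℝ (Fin 2)) (hS0 : S 0 = 0)
    (hSrec : ∀ i : ℕ,
      S (i + 1) = S i +
        (if |⟪vperp, S i + e1⟫| ≤ |⟪vperp, S i + e2⟫| then e1 else e2)) :
    ∀ i : ℕ, |⟪vperp, S i⟫| ≤ 1 := by
  set x : ℕ → ℝ := fun i => ⟪vperp, S i⟫ with hx
  have h1 : ⟪vperp, e1⟫ = -b := by
    simp [hvperp, he1, PiLp.inner_apply, Fin.sum_univ_two]
  have h2 : ⟪vperp, e2⟫ = a := by
    simp [hvperp, he2, PiLp.inner_apply, Fin.sum_univ_two]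
  have hx0 : x 0 = 0 := by simp [hx, hS0]
  have hxrec : ∀ i : ℕ, x (i + 1) =
      if |x i + -b| ≤ |x i + a| then x i + -b else x i + a := by
    intro i
    have hcond : (|⟪vperp, S i + e1⟫| ≤ |⟪vperp, S i + e2⟫|) ↔ (|x i + -b| ≤ |x i + a|) := by
      rw [inner_add_right, inner_add_right, h1, h2]
    have hstep := hSrec i
    by_cases h : |x i + -b| ≤ |x i + a|
    · rw [if_pos (hcond.mpr h)] at hstep
      rw [if_pos h]
      show ⟪vperp, S (i+1)⟫ = x i + -b
      rw [hstep, inner_add_right, h1]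
    · rw [if_neg (fun hc => h (hcond.mp hc))] at hstep
      rw [if_neg h]
      show ⟪vperp, S (i+1)⟫ = x i + a
      rw [hstep, inner_add_right, h2]
  have key : ∀ i : ℕ, |x i| ≤ (a + b) / 2 := by
    intro i
    induction i with
    | zero => rw [hx0]; simp; positivity
    | succ n ih =>
      rw [hxrec n]
      rw [abs_le] at ih ⊢
      by_cases h : |x n + -b| ≤ |x n + a|
      · simp only [h, if_true]
        have h' : x n ≥ (b - a) / 2 := by
          have hsq := mul_self_le_mul_self (abs_nonneg (x n + -b)) h
          rw [abs_mul_abs_self, abs_mul_abs_self] at hsq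
          nlinarith
        constructor <;> linarith [ih.1, ih.2]
      · simp only [h, if_false]
        push_neg at h
        have h' : x n ≤ (b - a) / 2 := by
          have hsq := mul_self_le_mul_self (abs_nonneg (x n + a)) h.le
          rw [abs_mul_abs_self, abs_mul_abs_self] at hsq
          nlinarith
        constructor <;> linarith [ih.1, ih.2]
  intro i
  have := key i
  have ha1 : a ≤ 1 := by nlinarith
  have hb1 : b ≤ 1 := by nlinarith
  calc |x i| ≤ (a + b) / 2 := this
    _ ≤ 1 := by linarith
end

section
/- Let f : X → X be a measurable map preserving an ergodic probability measure ν, and let φ : X → ℝ be integrable with ∫φ dν = 0. Then for ν-almost every x and every ε > 0, there exist infinitely many integers n ≥ 1 with |∑_{i=0}^{n-1} φ(f^i(x))| < ε. -/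
open MeasureTheory Filter Set
open scoped ENNReal Classical

namespace AtkinsonAux

variable {X : Type*} [MeasurableSpace X]

/-- Partial maxima of Birkhoff sums, defined recursively. -/
noncomputable def maxSum (f : X → X) (ψ : X → ℝ) : ℕ → X → ℝ
  | 0 => fun _ => 0
  | n + 1 => fun x => max 0 (ψ x + maxSum f ψ n (f x))

omit [MeasurableSpace X] in
lemma maxSum_nonneg (f : X → X) (ψ : X → ℝ) (n : ℕ) (x : X) : 0 ≤ maxSum f ψ n x := by
  cases n with
  | zero => simp [maxSum]
  | succ n => exact le_max_left _ _

omit [MeasurableSpace X] in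
lemma maxSum_mono (f : X → X) (ψ : X → ℝ) (n : ℕ) (x : X) :
    maxSum f ψ n x ≤ maxSum f ψ (n + 1) x := by
  induction n generalizing x with
  | zero => simpa [maxSum] using maxSum_nonneg f ψ 1 x
  | succ n ih =>
    simp only [maxSum]
    exact max_le_max le_rfl ((add_le_add_iff_left _).mpr (ih (f x)))

lemma maxSum_measurable {f : X → X} {ψ : X → ℝ} (hfm : Measurable f) (hm : Measurable ψ)
    (n : ℕ) : Measurable (maxSum f ψ n) := by
  induction n with
  | zero => simpa [maxSum] using measurable_const
  | succ n ih => exact measurable_const.max (hm.add (ih.comp hfm))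

lemma maxSum_integrable {ν : Measure X} {f : X → X} {ψ : X → ℝ}
    (hf : MeasurePreserving f ν ν) (hm : Measurable ψ) (hi : Integrable ψ ν) (n : ℕ) :
    Integrable (maxSum f ψ n) ν := by
  induction n with
  | zero => simpa [maxSum] using integrable_const (0 : ℝ)
  | succ n ih =>
    have hcomp : Integrable (fun x => maxSum f ψ n (f x)) ν :=
      (hf.integrable_comp (ih.aestronglyMeasurable)).mpr ih
    have : Integrable (fun x => max (ψ x + maxSum f ψ n (f x)) 0) ν := (hi.add hcomp).pos_part
    simpa [maxSum, max_comm] using this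

omit [MeasurableSpace X] in
lemma le_maxSum (f : X → X) (ψ : X → ℝ) {k n : ℕ} (hk : k ≤ n) (x : X) :
    birkhoffSum f ψ k x ≤ maxSum f ψ n x := by
  induction n generalizing k x with
  | zero => simp [Nat.le_zero.mp hk, birkhoffSum_zero, maxSum]
  | succ n ih =>
    cases k with
    | zero => simpa [birkhoffSum_zero] using maxSum_nonneg f ψ (n+1) x
    | succ k =>
      rw [birkhoffSum_succ']
      calc ψ x + birkhoffSum f ψ k (f x) ≤ ψ x + maxSum f ψ n (f x) := by
            linarith [ih (Nat.succ_le_succ_iff.mp hk) (f x)]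
        _ ≤ _ := le_max_right _ _

omit [MeasurableSpace X] in
lemma maxSum_attained (f : X → X) (ψ : X → ℝ) (n : ℕ) (x : X) :
    ∃ k ≤ n, maxSum f ψ n x = birkhoffSum f ψ k x := by
  induction n generalizing x with
  | zero => exact ⟨0, le_rfl, by simp [maxSum, birkhoffSum_zero]⟩
  | succ n ih =>
    rcases le_or_gt (ψ x + maxSum f ψ n (f x)) 0 with h | h
    · exact ⟨0, Nat.zero_le _, by simp [maxSum, birkhoffSum_zero, max_eq_left h]⟩
    · obtain ⟨k, hk, hkeq⟩ := ih (f x)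
      refine ⟨k + 1, Nat.succ_le_succ hk, ?_⟩
      rw [birkhoffSum_succ', ← hkeq]
      simpa [maxSum] using max_eq_right h.le

/-- Garsia's maximal ergodic inequality. -/
lemma garsia (ν : Measure X) [IsProbabilityMeasure ν] {f : X → X}
    (hf : MeasurePreserving f ν ν) {ψ : X → ℝ} (hm : Measurable ψ) (hi : Integrable ψ ν) :
    0 ≤ ∫ x in {x | ∃ n, 1 ≤ n ∧ 0 < birkhoffSum f ψ n x}, ψ x ∂ν := by
  set A : ℕ → Set X := fun n => {x | 0 < maxSum f ψ n x} with hA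
  have hAmeas : ∀ n, MeasurableSet (A n) :=
    fun n => measurableSet_lt measurable_const (maxSum_measurable hf.measurable hm n)
  have hAmono : Monotone A := by
    refine monotone_nat_of_le_succ fun n x hx => ?_
    exact lt_of_lt_of_le hx (maxSum_mono f ψ n x)
  have hUnion : (⋃ n, A n) = {x | ∃ n, 1 ≤ n ∧ 0 < birkhoffSum f ψ n x} := by
    ext x
    simp only [mem_iUnion, mem_setOf_eq]
    constructor
    · rintro ⟨n, hn⟩
      have hn' : 0 < maxSum f ψ n x := hn
      obtain ⟨k, hk, hkeq⟩ := maxSum_attained f ψ n x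
      rw [hkeq] at hn'
      refine ⟨k, ?_, hn'⟩
      rcases Nat.eq_zero_or_pos k with rfl | h
      · rw [birkhoffSum_zero] at hn'; exact absurd hn' (lt_irrefl 0)
      · exact h
    · rintro ⟨n, _, hn⟩
      exact ⟨n, lt_of_lt_of_le hn (le_maxSum f ψ le_rfl x)⟩
  have key : ∀ n, 0 ≤ ∫ x in A n, ψ x ∂ν := by
    intro n
    cases n with
    | zero =>
      have : A 0 = ∅ := by ext x; simp [hA, maxSum]
      simp [this]
    | succ n =>
      have hMn := maxSum_integrable hf hm hi n
      have hMn1 := maxSum_integrable hf hm hi (n+1)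
      have hcomp : Integrable (fun x => maxSum f ψ n (f x)) ν :=
        (hf.integrable_comp hMn.aestronglyMeasurable).mpr hMn
      have heq : ∫ x in A (n+1), ψ x ∂ν
          = ∫ x in A (n+1), (maxSum f ψ (n+1) x - maxSum f ψ n (f x)) ∂ν := by
        refine setIntegral_congr_fun (hAmeas (n+1)) fun x hx => ?_
        have hx' : 0 < ψ x + maxSum f ψ n (f x) := by
          have := hx
          simp only [hA, mem_setOf_eq, maxSum] at this
          rcases lt_max_iff.mp this with h | h
          · exact absurd h (lt_irrefl 0)
          · exact h
        have : maxSum f ψ (n+1) x = ψ x + maxSum f ψ n (f x) := by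
          simpa [maxSum] using max_eq_right hx'.le
        rw [this]; ring
      rw [heq, integral_sub (hMn1.integrableOn) (hcomp.integrableOn)]
      have h1 : ∫ x in A (n+1), maxSum f ψ (n+1) x ∂ν = ∫ x, maxSum f ψ (n+1) x ∂ν := by
        refine setIntegral_eq_integral_of_forall_compl_eq_zero fun x hx => ?_
        have h0 : ¬ (0 < maxSum f ψ (n+1) x) := hx
        exact le_antisymm (not_lt.mp h0) (maxSum_nonneg f ψ (n+1) x)
      have h2 : ∫ x in A (n+1), maxSum f ψ n (f x) ∂ν ≤ ∫ x, maxSum f ψ n (f x) ∂ν :=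
        setIntegral_le_integral hcomp (ae_of_all _ fun x => maxSum_nonneg f ψ n (f x))
      have h3 : ∫ x, maxSum f ψ n (f x) ∂ν = ∫ x, maxSum f ψ n x ∂ν := by
        conv_rhs => rw [← hf.map_eq]
        rw [integral_map hf.measurable.aemeasurable (hf.map_eq.symm ▸ hMn.aestronglyMeasurable)]
      have h4 : ∫ x, maxSum f ψ n x ∂ν ≤ ∫ x, maxSum f ψ (n+1) x ∂ν :=
        integral_mono hMn hMn1 (fun x => maxSum_mono f ψ n x)
      rw [h1]
      linarith
  have htend := tendsto_setIntegral_of_monotone hAmeas hAmono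
    (hi.integrableOn : IntegrableOn ψ (⋃ n, A n) ν)
  rw [hUnion] at htend
  exact ge_of_tendsto' htend key

lemma birkhoffSum_meas {f : X → X} {φ : X → ℝ} (hfm : Measurable f) (hm : Measurable φ)
    (n : ℕ) : Measurable (birkhoffSum f φ n) :=
  Finset.measurable_sum _ fun k _ => hm.comp (hfm.iterate k)

lemma freq_meas {f : X → X} {φ : X → ℝ} (hfm : Measurable f) (hm : Measurable φ) (q : ℝ) :
    MeasurableSet {x | ∃ᶠ n in atTop, q * n < birkhoffSum f φ n x} := by
  have : {x | ∃ᶠ n in atTop, q * n < birkhoffSum f φ n x}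
      = ⋂ m, ⋃ n, ⋃ _ : m ≤ n, {x | q * n < birkhoffSum f φ n x} := by
    ext x
    simp only [mem_setOf_eq, frequently_atTop, mem_iInter, mem_iUnion]
    exact ⟨fun h m => by obtain ⟨n, hn, h'⟩ := h m; exact ⟨n, hn, h'⟩,
      fun h m => by obtain ⟨n, hn, h'⟩ := h m; exact ⟨n, hn, h'⟩⟩
  rw [this]
  exact MeasurableSet.iInter fun m => MeasurableSet.iUnion fun n => MeasurableSet.iUnion
    fun _ => measurableSet_lt measurable_const (birkhoffSum_meas hfm hm n)

omit [MeasurableSpace X] in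
lemma birkhoffSum_sub_const (f : X → X) (φ : X → ℝ) (c : ℝ) (n : ℕ) (x : X) :
    birkhoffSum f (fun y => φ y - c) n x = birkhoffSum f φ n x - n * c := by
  simp [birkhoffSum, Finset.sum_sub_distrib, mul_comm]

/-- the key null set: where Birkhoff sums frequently exceed `q·n`. -/
lemma B_null (ν : Measure X) [IsProbabilityMeasure ν] {f : X → X} (hf : Ergodic f ν)
    {φ : X → ℝ} (hm : Measurable φ) (hi : Integrable φ ν) (hmean : ∫ x, φ x ∂ν = 0)
    {q : ℝ} (hq : 0 < q) :
    ν {x | ∃ᶠ n in atTop, q * n < birkhoffSum f φ n x} = 0 := by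
  set S := fun n x => birkhoffSum f φ n x with hS
  set B : ℝ → Set X := fun c => {x | ∃ᶠ n in atTop, c * n < S n x} with hB
  by_contra hq0
  set U : Set X := ⋃ m, f^[m] ⁻¹' (B q) with hU
  have hBm : ∀ c, MeasurableSet (B c) := fun c => freq_meas hf.measurable hm c
  have hUm : MeasurableSet U :=
    MeasurableSet.iUnion fun m => (hBm q).preimage (hf.measurable.iterate m)
  have hsub : f ⁻¹' U ⊆ U := by
    rw [hU, preimage_iUnion]
    refine iUnion_subset fun m => ?_
    have : f ⁻¹' (f^[m] ⁻¹' B q) = f^[m + 1] ⁻¹' B q := by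
      rw [Function.iterate_succ]; rfl
    rw [this]
    exact subset_iUnion (fun m => f^[m] ⁻¹' B q) (m + 1)
  have hae : ∀ᵐ x ∂ν, x ∈ U := by
    rcases hf.ae_empty_or_univ_of_preimage_ae_le hUm.nullMeasurableSet
        (HasSubset.Subset.eventuallyLE hsub) with h | h
    · exfalso
      apply hq0
      have hBU : B q ⊆ U := by
        have : f^[0] ⁻¹' B q ⊆ U := subset_iUnion (fun m => f^[m] ⁻¹' B q) 0
        simpa using this
      have h2 : ν (B q) ≤ ν U := measure_mono hBU
      rw [ae_eq_empty.mp h] at h2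
      exact le_zero_iff.mp h2
    · exact mem_ae_iff.mpr (ae_eq_univ.mp h)
  have hUB : U ⊆ B (q / 2) := by
    rintro x hx
    obtain ⟨m, hxm⟩ := mem_iUnion.mp hx
    have hxm' : ∃ᶠ n in atTop, q * n < S n (f^[m] x) := hxm
    rw [hB, mem_setOf_eq, frequently_atTop]
    rw [frequently_atTop] at hxm'
    intro a
    obtain ⟨n, hn, hlt⟩ := hxm' (max a (m + ⌈2 * |S m x| / q⌉₊))
    have hn1 : a ≤ n := le_trans (le_max_left _ _) hn
    have hn2 : m + ⌈2 * |S m x| / q⌉₊ ≤ n := le_trans (le_max_right _ _) hn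
    have hn2' : (m : ℝ) + ⌈2 * |S m x| / q⌉₊ ≤ n := by exact_mod_cast hn2
    refine ⟨m + n, by omega, ?_⟩
    have hadd : S (m + n) x = S m x + S n (f^[m] x) := birkhoffSum_add f φ m n x
    have hceil : 2 * |S m x| / q ≤ (⌈2 * |S m x| / q⌉₊ : ℝ) := Nat.le_ceil _
    have habs : -|S m x| ≤ S m x := neg_abs_le _
    have hdiv : 2 * |S m x| ≤ q * ((n : ℝ) - m) := by
      rw [div_le_iff₀ hq] at hceil
      nlinarith
    rw [hadd]
    push_cast
    nlinarith [hlt]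
  have : ν (B (q/2))ᶜ = 0 := by
    rw [← mem_ae_iff]
    filter_upwards [hae] with x hx using hUB hx
  set ψ : X → ℝ := fun x => φ x - q / 2 with hψ
  have hmψ : Measurable ψ := hm.sub measurable_const
  have hiψ : Integrable ψ ν := hi.sub (integrable_const _)
  have hsub2 : B (q/2) ⊆ {x | ∃ n, 1 ≤ n ∧ 0 < birkhoffSum f ψ n x} := by
    intro x hx
    obtain ⟨n, hn1, hlt⟩ := frequently_atTop.mp hx 1
    refine ⟨n, hn1, ?_⟩
    rw [hψ, birkhoffSum_sub_const]
    simp only [hS] at hlt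
    nlinarith [hlt]
  have hrest : ν.restrict {x | ∃ n, 1 ≤ n ∧ 0 < birkhoffSum f ψ n x} = ν := by
    apply Measure.restrict_eq_self_of_ae_mem
    filter_upwards [hae] with x hx using hsub2 (hUB hx)
  have hg := garsia ν hf.toMeasurePreserving hmψ hiψ
  rw [hrest] at hg
  have : ∫ x, ψ x ∂ν = -(q/2) := by
    rw [hψ]
    rw [integral_sub hi (integrable_const _), hmean, integral_const]
    simp
  rw [this] at hg
  linarith

omit [MeasurableSpace X] in
lemma birkhoffSum_neg' (f : X → X) (φ : X → ℝ) (n : ℕ) (x : X) :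
    birkhoffSum f (fun y => -φ y) n x = -birkhoffSum f φ n x := by
  simp [birkhoffSum]

/-- a.e., Birkhoff sums are `o(n)`. -/
lemma abs_o (ν : Measure X) [IsProbabilityMeasure ν] {f : X → X} (hf : Ergodic f ν)
    {φ : X → ℝ} (hm : Measurable φ) (hi : Integrable φ ν) (hmean : ∫ x, φ x ∂ν = 0) :
    ∀ᵐ x ∂ν, ∀ q : ℝ, 0 < q → ∀ᶠ n in atTop, |birkhoffSum f φ n x| ≤ q * n := by
  have hneg : ∫ x, -φ x ∂ν = 0 := by rw [integral_neg, hmean, neg_zero]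
  have key : ∀ᵐ x ∂ν, ∀ r : ℚ, 0 < r →
      (∀ᶠ n in atTop, birkhoffSum f φ n x ≤ r * n) ∧
      (∀ᶠ n in atTop, -birkhoffSum f φ n x ≤ r * n) := by
    rw [ae_all_iff]
    intro r
    rcases le_or_gt r 0 with hr | hr
    · filter_upwards with x hx; exact absurd hx (not_lt.mpr hr)
    have hr' : (0 : ℝ) < r := by exact_mod_cast hr
    have h1 := B_null ν hf hm hi hmean hr'
    have h2 := B_null ν hf hm.neg hi.neg hneg hr'
    have h2' : ν {x | ∃ᶠ n in atTop, (r:ℝ) * n < -birkhoffSum f φ n x} = 0 := by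
      have heqset : {x | ∃ᶠ n in atTop, (r:ℝ) * n < birkhoffSum f (fun y => -φ y) n x}
          = {x | ∃ᶠ n in atTop, (r:ℝ) * n < -birkhoffSum f φ n x} := by
        ext x
        simp only [mem_setOf_eq, birkhoffSum_neg']
      rw [← heqset]
      exact h2
    have ha1 := measure_eq_zero_iff_ae_notMem.mp h1
    have ha2 := measure_eq_zero_iff_ae_notMem.mp h2'
    filter_upwards [ha1, ha2] with x hx1 hx2 _
    constructor
    · have := not_frequently.mp hx1
      filter_upwards [this] with n hn using not_lt.mp hn
    · have := not_frequently.mp hx2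
      filter_upwards [this] with n hn using not_lt.mp hn
  filter_upwards [key] with x hx q hq
  obtain ⟨r, hr0, hrq⟩ := exists_rat_btwn hq
  have hr0' : 0 < r := by exact_mod_cast hr0
  obtain ⟨h1, h2⟩ := hx r hr0'
  filter_upwards [h1, h2] with n hn1 hn2
  rw [abs_le]
  have hn : (0:ℝ) ≤ n := Nat.cast_nonneg n
  constructor <;> nlinarith [hrq.le]

/-- number of visits to E among the first N iterates -/
noncomputable def nvis (f : X → X) (E : Set X) (N : ℕ) (x : X) : ℕ :=
  ((Finset.range N).filter fun k => f^[k] x ∈ E).card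

omit [MeasurableSpace X] in
lemma nvis_real (f : X → X) (E : Set X) (N : ℕ) (x : X) :
    (nvis f E N x : ℝ) = ∑ k ∈ Finset.range N, E.indicator (fun _ => (1:ℝ)) (f^[k] x) := by
  rw [nvis, Finset.card_filter]
  push_cast
  refine Finset.sum_congr rfl fun k _ => ?_
  by_cases h : f^[k] x ∈ E <;> simp [h]

omit [MeasurableSpace X] in
lemma nvis_ennreal (f : X → X) (E : Set X) (N : ℕ) (x : X) :
    (nvis f E N x : ℝ≥0∞) = ∑ k ∈ Finset.range N, E.indicator (fun _ => (1:ℝ≥0∞)) (f^[k] x) := by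
  rw [nvis, Finset.card_filter]
  push_cast
  refine Finset.sum_congr rfl fun k _ => ?_
  by_cases h : f^[k] x ∈ E <;> simp [h]

lemma nvis_meas {f : X → X} {E : Set X} (hfm : Measurable f) (hE : MeasurableSet E) (N : ℕ) :
    Measurable fun x => (nvis f E N x : ℝ) := by
  simp only [nvis_real]
  exact Finset.measurable_sum _ fun k _ =>
    ((measurable_const.indicator hE)).comp (hfm.iterate k)

lemma nvis_freq_meas {f : X → X} {E : Set X} (hfm : Measurable f) (hE : MeasurableSet E)
    (c : ℝ) : MeasurableSet {x | ∃ᶠ N in atTop, c * N < (nvis f E N x : ℝ)} := by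
  have : {x | ∃ᶠ N in atTop, c * N < (nvis f E N x : ℝ)}
      = ⋂ m, ⋃ N, ⋃ _ : m ≤ N, {x | c * N < (nvis f E N x : ℝ)} := by
    ext x
    simp only [mem_setOf_eq, frequently_atTop, mem_iInter, mem_iUnion]
    exact ⟨fun h m => by obtain ⟨n, hn, h'⟩ := h m; exact ⟨n, hn, h'⟩,
      fun h m => by obtain ⟨n, hn, h'⟩ := h m; exact ⟨n, hn, h'⟩⟩
  rw [this]
  exact MeasurableSet.iInter fun m => MeasurableSet.iUnion fun N => MeasurableSet.iUnion
    fun _ => measurableSet_lt measurable_const (nvis_meas hfm hE N)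

omit [MeasurableSpace X] in
lemma nvis_mono_shift (f : X → X) (E : Set X) (N m : ℕ) (x : X) :
    nvis f E N (f^[m] x) ≤ nvis f E (N + m) x := by
  rw [nvis, nvis]
  apply Finset.card_le_card_of_injOn (fun k => k + m)
  · intro k hk
    simp only [Finset.mem_coe, Finset.mem_filter, Finset.mem_range] at hk ⊢
    refine ⟨by omega, ?_⟩
    rw [Function.iterate_add_apply]
    exact hk.2
  · intro a _ b _ h
    simpa using h

/-- visit frequency is a.e. frequently at least a positive constant -/
lemma visit_freq (ν : Measure X) [IsProbabilityMeasure ν] {f : X → X} (hf : Ergodic f ν)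
    {E : Set X} (hE : MeasurableSet E) (hE0 : ν E ≠ 0) :
    ∃ c : ℝ, 0 < c ∧ ∀ᵐ x ∂ν, ∃ᶠ N in atTop, c * N < (nvis f E N x : ℝ) := by
  set c₀ : ℝ := (ν E).toReal with hc₀
  have hEfin : ν E ≠ ∞ := measure_ne_top ν E
  have hc₀pos : 0 < c₀ := ENNReal.toReal_pos hE0 hEfin
  set B : ℝ → Set X := fun c => {x | ∃ᶠ N in atTop, c * N < (nvis f E N x : ℝ)} with hB
  have hBm : ∀ c, MeasurableSet (B c) := fun c => nvis_freq_meas hf.measurable hE c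
  have hstepA : ν (B (c₀ / 2)) ≠ 0 := by
    intro h0
    have hev : ∀ᵐ x ∂ν, ∀ᶠ N in atTop, (nvis f E N x : ℝ) ≤ c₀ / 2 * N := by
      have h1 : ∀ᵐ x ∂ν, x ∉ B (c₀ / 2) := by
        rw [← compl_mem_ae_iff] at h0
        exact h0
      filter_upwards [h1] with x hx
      rw [hB, mem_setOf_eq, not_frequently] at hx
      filter_upwards [hx] with N hN
      exact not_lt.mp hN
    set g : ℕ → X → ℝ≥0∞ := fun N x => (nvis f E N x : ℝ≥0∞) / N with hg
    have hmk : ∀ k : ℕ, Measurable fun x => E.indicator (fun _ => (1:ℝ≥0∞)) (f^[k] x) :=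
      fun k => (measurable_const.indicator hE).comp (hf.measurable.iterate k)
    have hgmeas : ∀ N, Measurable (g N) := by
      intro N
      apply Measurable.div _ measurable_const
      simp only [nvis_ennreal]
      exact Finset.measurable_sum _ fun k _ => hmk k
    have hgle : ∀ N, g N ≤ᵐ[ν] fun _ => (1 : ℝ≥0∞) := by
      intro N
      refine ae_of_all _ fun x => ?_
      refine ENNReal.div_le_of_le_mul ?_
      rw [one_mul]
      have : nvis f E N x ≤ N := le_trans (Finset.card_filter_le _ _) (by simp)
      exact_mod_cast this
    have hint : ∀ N : ℕ, 1 ≤ N → ∫⁻ x, g N x ∂ν = ν E := by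
      intro N hN
      have hNne : (N : ℝ≥0∞) ≠ 0 := by
        exact_mod_cast Nat.cast_ne_zero.mpr (show N ≠ 0 by omega)
      have hNtop : (N : ℝ≥0∞) ≠ ∞ := ENNReal.natCast_ne_top N
      have h1 : ∫⁻ x, (nvis f E N x : ℝ≥0∞) ∂ν = N * ν E := by
        simp only [nvis_ennreal]
        rw [lintegral_finset_sum _ (fun k _ => hmk k)]
        have h2 : ∀ k : ℕ, ∫⁻ x, E.indicator (fun _ => (1:ℝ≥0∞)) (f^[k] x) ∂ν = ν E := by
          intro k
          rw [(hf.toMeasurePreserving.iterate k).lintegral_comp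
            (measurable_const.indicator hE)]
          exact lintegral_indicator_one hE
        simp [h2, Finset.sum_const, Finset.card_range]
      have : g N = fun x => (nvis f E N x : ℝ≥0∞) * (N : ℝ≥0∞)⁻¹ := by
        funext x
        show (nvis f E N x : ℝ≥0∞) / N = _
        rw [ENNReal.div_eq_inv_mul, mul_comm]
      rw [this, lintegral_mul_const' _ _ (ENNReal.inv_ne_top.mpr hNne), h1,
        mul_comm (N : ℝ≥0∞) (ν E), mul_assoc, ENNReal.mul_inv_cancel hNne hNtop, mul_one]
    have hls1 : limsup (fun N => ∫⁻ x, g N x ∂ν) atTop = ν E := by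
      have heq : (fun N => ∫⁻ x, g N x ∂ν) =ᶠ[atTop] fun _ => ν E := by
        filter_upwards [eventually_ge_atTop 1] with N hN using hint N hN
      rw [limsup_congr heq]
      exact limsup_const _
    have hrf := limsup_lintegral_le (μ := ν) (f := g) (fun _ => (1:ℝ≥0∞)) hgmeas hgle (by simp)
    have hptwise : ∫⁻ x, limsup (fun N => g N x) atTop ∂ν ≤ ENNReal.ofReal (c₀ / 2) := by
      have hle : ∀ᵐ x ∂ν, limsup (fun N => g N x) atTop ≤ ENNReal.ofReal (c₀ / 2) := by
        filter_upwards [hev] with x hx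
        apply limsup_le_of_le (by isBoundedDefault)
        filter_upwards [hx, eventually_ge_atTop 1] with N h1 h2
        refine ENNReal.div_le_of_le_mul ?_
        calc (nvis f E N x : ℝ≥0∞) = ENNReal.ofReal (nvis f E N x : ℝ) := by
              rw [ENNReal.ofReal_natCast]
          _ ≤ ENNReal.ofReal (c₀ / 2 * N) := ENNReal.ofReal_le_ofReal h1
          _ = ENNReal.ofReal (c₀ / 2) * ENNReal.ofReal (N : ℝ) := by
              rw [ENNReal.ofReal_mul (by positivity)]
          _ = ENNReal.ofReal (c₀ / 2) * N := by rw [ENNReal.ofReal_natCast]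
      calc ∫⁻ x, limsup (fun N => g N x) atTop ∂ν ≤ ∫⁻ _, ENNReal.ofReal (c₀ / 2) ∂ν :=
            lintegral_mono_ae hle
        _ = ENNReal.ofReal (c₀ / 2) := by simp
    have hfinal : ν E ≤ ENNReal.ofReal (c₀ / 2) := by
      rw [← hls1]
      exact le_trans hrf hptwise
    have : c₀ ≤ c₀ / 2 := by
      have h2 := ENNReal.toReal_mono ENNReal.ofReal_ne_top hfinal
      rwa [ENNReal.toReal_ofReal (by positivity)] at h2
    linarith
  refine ⟨c₀ / 4, by positivity, ?_⟩
  set U : Set X := ⋃ m, f^[m] ⁻¹' (B (c₀ / 2)) with hU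
  have hUm : MeasurableSet U :=
    MeasurableSet.iUnion fun m => (hBm _).preimage (hf.measurable.iterate m)
  have hsub : f ⁻¹' U ⊆ U := by
    rw [hU, preimage_iUnion]
    refine iUnion_subset fun m => ?_
    have h3 : f ⁻¹' (f^[m] ⁻¹' B (c₀ / 2)) = f^[m + 1] ⁻¹' B (c₀ / 2) := by
      rw [Function.iterate_succ]; rfl
    rw [h3]
    exact subset_iUnion (fun m => f^[m] ⁻¹' B (c₀ / 2)) (m + 1)
  have hae : ∀ᵐ x ∂ν, x ∈ U := by
    rcases hf.ae_empty_or_univ_of_preimage_ae_le hUm.nullMeasurableSet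
        (HasSubset.Subset.eventuallyLE hsub) with h | h
    · exfalso
      apply hstepA
      have hBU : B (c₀ / 2) ⊆ U := by
        have h4 : f^[0] ⁻¹' B (c₀ / 2) ⊆ U := subset_iUnion (fun m => f^[m] ⁻¹' B (c₀ / 2)) 0
        simpa using h4
      have h2 : ν (B (c₀ / 2)) ≤ ν U := measure_mono hBU
      rw [ae_eq_empty.mp h] at h2
      exact le_zero_iff.mp h2
    · exact mem_ae_iff.mpr (ae_eq_univ.mp h)
  have hUB : U ⊆ B (c₀ / 4) := by
    rintro x hx
    obtain ⟨m, hxm⟩ := mem_iUnion.mp hx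
    have hxm' : ∀ a : ℕ, ∃ N ≥ a, c₀ / 2 * N < (nvis f E N (f^[m] x) : ℝ) :=
      frequently_atTop.mp hxm
    rw [hB, mem_setOf_eq, frequently_atTop]
    intro a
    obtain ⟨N, hN, hlt⟩ := hxm' (max a m)
    have hN1 : a ≤ N := le_trans (le_max_left _ _) hN
    have hN2 : m ≤ N := le_trans (le_max_right _ _) hN
    refine ⟨N + m, by omega, ?_⟩
    have hmono := nvis_mono_shift f E N m x
    have hmono' : (nvis f E N (f^[m] x) : ℝ) ≤ (nvis f E (N + m) x : ℝ) := by exact_mod_cast hmono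
    have hNm : (m : ℝ) ≤ N := by exact_mod_cast hN2
    push_cast
    nlinarith [hlt]
  filter_upwards [hae] with x hx using hUB hx

lemma floor_sep {ε a b : ℝ} (hε : 0 < ε) (h : ε ≤ |a - b|) : ⌊a / ε⌋ ≠ ⌊b / ε⌋ := by
  intro heq
  have h1 := Int.floor_le (a / ε)
  have h2 := Int.lt_floor_add_one (a / ε)
  have h3 := Int.floor_le (b / ε)
  have h4 := Int.lt_floor_add_one (b / ε)
  have heq' : ((⌊a / ε⌋ : ℤ) : ℝ) = ((⌊b / ε⌋ : ℤ) : ℝ) := by exact_mod_cast heq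
  have hd1 : (a - b) / ε < 1 := by rw [sub_div]; linarith
  have hd2 : (b - a) / ε < 1 := by rw [sub_div]; linarith
  have ha1 : a - b < ε := by
    have := (div_lt_one hε).mp hd1; linarith
  have ha2 : b - a < ε := by
    have := (div_lt_one hε).mp hd2; linarith
  have : |a - b| < ε := abs_sub_lt_iff.mpr ⟨ha1, ha2⟩
  linarith

/-- Atkinson's separation argument : the set of points whose Birkhoff sums stay
ε-away from 0 from time N on is null. -/
lemma E_null (ν : Measure X) [IsProbabilityMeasure ν] {f : X → X} (hf : Ergodic f ν)
    {φ : X → ℝ} (hm : Measurable φ) (hi : Integrable φ ν) (hmean : ∫ x, φ x ∂ν = 0)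
    {ε : ℝ} (hε : 0 < ε) {N : ℕ} (hN : 1 ≤ N) :
    ν {x | ∀ n, N ≤ n → ε ≤ |birkhoffSum f φ n x|} = 0 := by
  by_contra hE0
  set S : ℕ → X → ℝ := fun n x => birkhoffSum f φ n x with hS
  set E := {x | ∀ n, N ≤ n → ε ≤ |S n x|} with hEdef
  have hEmeas : MeasurableSet E := by
    have : E = ⋂ n, ⋂ _ : N ≤ n, {x | ε ≤ |S n x|} := by
      ext x; simp [hEdef, mem_iInter]
    rw [this]
    exact MeasurableSet.iInter fun n => MeasurableSet.iInter fun _ =>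
      measurableSet_le measurable_const (birkhoffSum_meas hf.measurable hm n).abs
  obtain ⟨c, hc, hfreq⟩ := visit_freq ν hf hEmeas hE0
  have ho := abs_o ν hf hm hi hmean
  haveI : (ae ν).NeBot := ae_neBot.mpr (IsProbabilityMeasure.ne_zero ν)
  obtain ⟨x, hx1, hx2⟩ := (hfreq.and ho).exists
  set q : ℝ := c * ε / (8 * N) with hq
  have hNR : (1:ℝ) ≤ N := by exact_mod_cast hN
  have hq0 : 0 < q := by positivity
  obtain ⟨K, hK⟩ := eventually_atTop.mp (hx2 q hq0)
  set C : ℝ := ∑ i ∈ Finset.range K, |S i x| with hC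
  have hCnn : 0 ≤ C := Finset.sum_nonneg fun i _ => abs_nonneg _
  have hbound : ∀ k : ℕ, |S k x| ≤ C + q * k := by
    intro k
    rcases lt_or_ge k K with h | h
    · have h1 : |S k x| ≤ C := Finset.single_le_sum (f := fun i => |S i x|)
        (fun i _ => abs_nonneg _) (Finset.mem_range.mpr h)
      have : (0:ℝ) ≤ q * k := by positivity
      linarith
    · have := hK k h; linarith
  obtain ⟨a, ha⟩ := exists_nat_gt ((2 * N * C / ε + 2 * N + 1) * (4 / (3 * c)))
  obtain ⟨M, hMa, hMlt⟩ := frequently_atTop.mp hx1 (max a 1)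
  have hM1 : 1 ≤ M := le_trans (le_max_right _ _) hMa
  have hMaR : (a : ℝ) ≤ M := by exact_mod_cast le_trans (le_max_left _ _) hMa
  set T := (Finset.range M).filter (fun k => f^[k] x ∈ E) with hT
  have hTcard : T.card = nvis f E M x := rfl
  have hVT : c * M < (T.card : ℝ) := by rw [hTcard]; exact hMlt
  have hfib : T.card = ∑ j ∈ Finset.range N, (T.filter fun k => k % N = j).card :=
    Finset.card_eq_sum_card_fiberwise fun k _ => Finset.mem_range.mpr (Nat.mod_lt k (by omega))
  have hNne : (Finset.range N).Nonempty := ⟨0, Finset.mem_range.mpr (by omega)⟩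
  obtain ⟨j, hj, hjle⟩ := Finset.exists_le_of_sum_le (f := fun _ : ℕ => T.card)
    (g := fun j => N * (T.filter fun k => k % N = j).card) hNne
    (by
      rw [Finset.sum_const, Finset.card_range, ← Finset.mul_sum, ← hfib, smul_eq_mul])
  set Tj := T.filter (fun k => k % N = j) with hTj
  have hsep : ∀ k ∈ Tj, ∀ l ∈ Tj, k < l → ε ≤ |S l x - S k x| := by
    intro k hk l hl hkl
    have hk' := Finset.mem_filter.mp (Finset.mem_filter.mp hk).1
    have hl' := Finset.mem_filter.mp (Finset.mem_filter.mp hl).1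
    have hkj : k % N = j := (Finset.mem_filter.mp hk).2
    have hlj : l % N = j := (Finset.mem_filter.mp hl).2
    set d := l - k with hd
    have hmod : (l - k) % N = 0 := Nat.sub_mod_eq_zero_of_mod_eq (by rw [hlj, hkj])
    have hdN : N ≤ d := Nat.le_of_dvd (by omega) (Nat.dvd_of_mod_eq_zero hmod)
    have hadd : S l x = S k x + birkhoffSum f φ d (f^[k] x) := by
      have : k + d = l := by omega
      rw [← this]
      exact birkhoffSum_add f φ k d x
    have hEk : f^[k] x ∈ E := hk'.2
    have hsep' : ε ≤ |birkhoffSum f φ d (f^[k] x)| := hEk d hdN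
    rw [hadd]
    simpa using hsep'
  have hinj : Set.InjOn (fun k => ⌊S k x / ε⌋) ↑Tj := by
    intro k hk l hl heq
    simp only at heq
    by_contra hne
    rcases Nat.lt_or_ge k l with h | h
    · exact floor_sep hε (hsep k (Finset.mem_coe.mp hk) l (Finset.mem_coe.mp hl) h) heq.symm
    · have h' : l < k := by omega
      exact floor_sep hε (hsep l (Finset.mem_coe.mp hl) k (Finset.mem_coe.mp hk) h') heq
  set m : ℝ := C + q * M with hmdef
  have hmnn : 0 ≤ m := by positivity
  have hmaps : ∀ k ∈ Tj, ⌊S k x / ε⌋ ∈ Finset.Icc ⌊-m / ε⌋ ⌊m / ε⌋ := by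
    intro k hk
    have hkM : k < M :=
      Finset.mem_range.mp (Finset.mem_filter.mp (Finset.mem_filter.mp hk).1).1
    have h1 : |S k x| ≤ m := by
      have := hbound k
      have h2 : q * k ≤ q * M := by
        apply mul_le_mul_of_nonneg_left _ hq0.le
        exact_mod_cast hkM.le
      rw [hmdef]; linarith
    rw [Finset.mem_Icc]
    have habs := abs_le.mp h1
    constructor
    · exact Int.floor_le_floor ((div_le_div_iff_of_pos_right hε).mpr (by linarith))
    · exact Int.floor_le_floor ((div_le_div_iff_of_pos_right hε).mpr (by linarith))
  have hcard2 : Tj.card ≤ (Finset.Icc ⌊-m / ε⌋ ⌊m / ε⌋).card :=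
    Finset.card_le_card_of_injOn _ hmaps hinj
  have hIcc : ((Finset.Icc ⌊-m / ε⌋ ⌊m / ε⌋).card : ℝ) ≤ 2 * m / ε + 2 := by
    rw [Int.card_Icc]
    have hfl : ⌊-m / ε⌋ ≤ ⌊m / ε⌋ := by
      apply Int.floor_le_floor
      rw [div_le_div_iff_of_pos_right hε]
      linarith
    have hz : (0:ℤ) ≤ ⌊m / ε⌋ + 1 - ⌊-m / ε⌋ := by omega
    have hcast : (((⌊m / ε⌋ + 1 - ⌊-m / ε⌋).toNat : ℕ) : ℝ)
        = ((⌊m / ε⌋ + 1 - ⌊-m / ε⌋ : ℤ) : ℝ) := by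
      rw [← Int.cast_natCast, Int.toNat_of_nonneg hz]
    rw [hcast]
    push_cast
    have f1 : (⌊m / ε⌋ : ℝ) ≤ m / ε := Int.floor_le _
    have f2 : -m / ε - 1 < (⌊-m / ε⌋ : ℝ) := by linarith [Int.lt_floor_add_one (-m / ε)]
    have hnd : -m / ε = -(m / ε) := neg_div ε m
    rw [mul_div_assoc]
    linarith
  have hTjR : (Tj.card : ℝ) ≤ 2 * m / ε + 2 := le_trans (by exact_mod_cast hcard2) hIcc
  have hchain : c * M < N * (2 * m / ε + 2) := by
    calc c * M < (T.card : ℝ) := hVT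
      _ ≤ (N : ℝ) * (Tj.card : ℝ) := by exact_mod_cast hjle
      _ ≤ N * (2 * m / ε + 2) := by
          apply mul_le_mul_of_nonneg_left hTjR (Nat.cast_nonneg N)
  have hexp : (N:ℝ) * (2 * m / ε + 2) = 2 * N * C / ε + (c / 4) * M + 2 * N := by
    have hε' : (ε:ℝ) ≠ 0 := ne_of_gt hε
    have hN' : (N:ℝ) ≠ 0 := by positivity
    rw [hmdef, hq]
    field_simp
    ring
  rw [hexp] at hchain
  have h3c : 0 < 3 * c / 4 := by positivity
  have hMbound : (3 * c / 4) * M < 2 * N * C / ε + 2 * N := by linarith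
  have hD : (0:ℝ) ≤ 2 * N * C / ε + 2 * N := by positivity
  have hkey2 : (3 * c / 4) * ((2 * N * C / ε + 2 * N + 1) * (4 / (3 * c)))
      = 2 * N * C / ε + 2 * N + 1 := by
    have hc' : c ≠ 0 := ne_of_gt hc
    field_simp
  have hMlt2 : (M:ℝ) < (2 * N * C / ε + 2 * N + 1) * (4 / (3 * c)) := by
    have h5 : (3 * c / 4) * M < (3 * c / 4) * ((2 * N * C / ε + 2 * N + 1) * (4 / (3 * c))) := by
      rw [hkey2]; linarith
    exact lt_of_mul_lt_mul_left h5 (by positivity)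
  linarith

end AtkinsonAux

open AtkinsonAux

/-- Atkinson's lemma: if `f` preserves the ergodic probability measure `ν` and
`φ` is integrable with `∫ φ dν = 0`, then for `ν`-a.e. `x` and every `ε > 0` there are
infinitely many `n ≥ 1` with `|∑_{i<n} φ(fⁱ(x))| < ε`. -/
theorem atkinson_lemma
    {X : Type*} [MeasurableSpace X] (ν : Measure X) [IsProbabilityMeasure ν]
    (f : X → X) (hf : Ergodic f ν)
    (φ : X → ℝ) (hφ : Integrable φ ν) (hmean : ∫ x, φ x ∂ν = 0) :
    ∀ᵐ x ∂ν, ∀ ε : ℝ, 0 < ε →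
      {n : ℕ | 1 ≤ n ∧ |∑ i ∈ Finset.range n, φ (f^[i] x)| < ε}.Infinite := by
  classical
  have hsm := hφ.1
  set φ' : X → ℝ := hsm.mk φ with hφ'def
  have hm' : Measurable φ' := hsm.stronglyMeasurable_mk.measurable
  have heq : φ =ᵐ[ν] φ' := hsm.ae_eq_mk
  have hi' : Integrable φ' ν := hφ.congr heq
  have hmean' : ∫ x, φ' x ∂ν = 0 := by rw [← integral_congr_ae heq]; exact hmean
  have hSeq : ∀ᵐ x ∂ν, ∀ n : ℕ, birkhoffSum f φ n x = birkhoffSum f φ' n x := by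
    rw [ae_all_iff]
    intro n
    have hiter : ∀ i : ℕ, (fun x => φ (f^[i] x)) =ᵐ[ν] fun x => φ' (f^[i] x) := fun i =>
      (hf.toMeasurePreserving.iterate i).quasiMeasurePreserving.ae_eq_comp heq
    have hall : ∀ᵐ x ∂ν, ∀ i : ℕ, φ (f^[i] x) = φ' (f^[i] x) := ae_all_iff.mpr hiter
    filter_upwards [hall] with x hx
    exact Finset.sum_congr rfl fun i _ => hx i
  have hnull : ∀ᵐ x ∂ν, ∀ r : ℚ, 0 < r → ∀ N : ℕ, 1 ≤ N →
      ∃ n, N ≤ n ∧ |birkhoffSum f φ' n x| < (r:ℝ) := by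
    rw [ae_all_iff]
    intro r
    rcases le_or_gt r 0 with hr | hr
    · filter_upwards with x hx N hN; exact absurd hx (not_lt.mpr hr)
    · have hr' : (0:ℝ) < r := by exact_mod_cast hr
      have key : ∀ᵐ x ∂ν, ∀ N : ℕ,
          x ∉ {y | ∀ n, max N 1 ≤ n → (r:ℝ) ≤ |birkhoffSum f φ' n y|} := by
        rw [ae_all_iff]
        intro N
        exact measure_eq_zero_iff_ae_notMem.mp
          (E_null ν hf hm' hi' hmean' hr' (le_max_right N 1))
      filter_upwards [key] with x hx _ N hN
      have hx' := hx N
      simp only [mem_setOf_eq, not_forall, not_le] at hx'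
      obtain ⟨n, hn1, hn2⟩ := hx'
      exact ⟨n, le_trans (le_max_left N 1) hn1, hn2⟩
  filter_upwards [hSeq, hnull] with x hxS hx ε hε
  obtain ⟨r, hr0, hrε⟩ := exists_rat_btwn hε
  have hr0' : 0 < r := by exact_mod_cast hr0
  have hub : ¬ BddAbove {n : ℕ | 1 ≤ n ∧ |∑ i ∈ Finset.range n, φ (f^[i] x)| < ε} := by
    rintro ⟨b, hb⟩
    obtain ⟨n, hn1, hn2⟩ := hx r hr0' (b + 1) (by omega)
    have hmem : n ∈ {n : ℕ | 1 ≤ n ∧ |∑ i ∈ Finset.range n, φ (f^[i] x)| < ε} := by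
      constructor
      · omega
      · have hrfl : (∑ i ∈ Finset.range n, φ (f^[i] x)) = birkhoffSum f φ n x := rfl
        rw [hrfl, hxS n]
        calc |birkhoffSum f φ' n x| < (r:ℝ) := hn2
          _ < ε := hrε
    have := hb hmem
    omega
  exact Set.infinite_of_not_bddAbove hub
end

section
/- Let v ∈ ℝ² be a unit vector, v⊥ its rotation by π/2, and let θ ⊂ ℝ² be a closed connected set such that (i) ⟨z, v⊥⟩ ∈ [m, M] for all z ∈ θ for some reals m < M, and (ii) θ intersects every line parallel to v⊥. Then ℝ² \ θ has at least two distinct unbounded connected components: one containing the half-plane {z : ⟨z, v⊥⟩ > M} and one containing {z : ⟨z, v⊥⟩ < m}. -/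
open Complex Set Finset

noncomputable section StripSepAux

/-- clamp to [0,1] -/
def clampI (τ : ℝ) : ℝ := min 1 (max 0 τ)

lemma clampI_mem (τ : ℝ) : clampI τ ∈ Icc (0:ℝ) 1 := by
  constructor
  · exact le_min (by norm_num) (le_max_left _ _)
  · exact min_le_left _ _

lemma clampI_of_mem {τ : ℝ} (h : τ ∈ Icc (0:ℝ) 1) : clampI τ = τ := by
  rcases h with ⟨h0, h1⟩
  simp [clampI, max_eq_right h0, min_eq_right h1]

lemma clampI_idem (τ : ℝ) : clampI (clampI τ) = clampI τ := clampI_of_mem (clampI_mem τ)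

lemma clampI_lipschitz (σ τ : ℝ) : |clampI σ - clampI τ| ≤ |σ - τ| := by
  have h1 : |max 0 σ - max 0 τ| ≤ |σ - τ| := by
    simpa [max_comm] using abs_max_sub_max_le_abs σ τ 0
  have h2 : |min 1 (max 0 σ) - min 1 (max 0 τ)| ≤ |max 0 σ - max 0 τ| := by
    set a := max 0 σ with ha; set b := max 0 τ with hb
    rcases le_total a 1 with h | h <;> rcases le_total b 1 with h' | h'
    · rw [min_eq_right h, min_eq_right h']
    · rw [min_eq_right h, min_eq_left h', abs_sub_comm a 1, _root_.abs_of_nonneg (by linarith),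
        abs_sub_comm a b, _root_.abs_of_nonneg (by linarith)]
      linarith
    · rw [min_eq_left h, min_eq_right h', _root_.abs_of_nonneg (by linarith),
        _root_.abs_of_nonneg (by linarith)]
      linarith
    · rw [min_eq_left h, min_eq_left h']
      simp
  exact le_trans h2 h1

lemma continuous_clampI : Continuous clampI :=
  (continuous_const.min (continuous_const.max continuous_id))

/-- `φ` is a continuous angle lift of `c`. -/
def IsCLift (c : ℝ → ℂ) (φ : ℝ → ℝ) : Prop :=
  Continuous φ ∧ ∀ τ, c τ = (‖c τ‖ : ℂ) * Complex.exp (φ τ * Complex.I)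

lemma expArg {z : ℂ} (hz : z ≠ 0) : Complex.exp ((Complex.arg z : ℂ) * Complex.I) = z / ‖z‖ := by
  have h := Complex.norm_mul_exp_arg_mul_I z
  have habs : (‖z‖ : ℂ) ≠ 0 := by
    simpa using (norm_ne_zero_iff.mpr hz)
  field_simp
  linear_combination h

lemma re_div_pos {z w : ℂ} (hw : w ≠ 0) (h : ‖z - w‖ < ‖w‖) :
    0 < (z / w).re := by
  have hww : (0:ℝ) < ‖w‖ := by
    simpa using norm_pos_iff.mpr hw
  have h1 : ‖z / w - 1‖ < 1 := by
    have : z / w - 1 = (z - w) / w := by field_simp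
    rw [this, norm_div]
    rw [div_lt_one hww]
    exact h
  have h2 : |(z / w - 1).re| ≤ ‖z / w - 1‖ := Complex.abs_re_le_norm _
  have h3 : (z / w - 1).re = (z / w).re - 1 := by simp
  have h4 : |(z / w).re - 1| < 1 := by rw [← h3]; exact lt_of_le_of_lt h2 h1
  linarith [(abs_lt.mp h4).1]

lemma teleprod {K : Type*} [Field K] (f : ℕ → K) (hf : ∀ j, f j ≠ 0) (n : ℕ) :
    ∏ j ∈ Finset.range n, (f (j+1) / f j) = f n / f 0 := by
  induction n with
  | zero => simp [div_self (hf 0)]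
  | succ n ih =>
      rw [Finset.prod_range_succ, ih, div_mul_div_comm, mul_comm (f 0) (f n)]
      exact mul_div_mul_left _ _ (hf n)

lemma min_sub_min_le {τ a b : ℝ} (hab : a ≤ b) : |min τ b - min τ a| ≤ b - a := by
  rcases le_total τ a with h | h
  · rw [min_eq_left (le_trans h hab), min_eq_left h]
    simpa using (sub_nonneg.mpr hab)
  · rcases le_total τ b with h' | h'
    · rw [min_eq_left h', min_eq_right h]
      rw [_root_.abs_of_nonneg (by linarith)]
      linarith
    · rw [min_eq_right h', min_eq_right h]
      rw [_root_.abs_of_nonneg (by linarith)]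

lemma exists_clift (c : ℝ → ℂ) (hc : Continuous c) (hne : ∀ τ, c τ ≠ 0)
    (hcl : ∀ τ, c τ = c (clampI τ)) : ∃ φ, IsCLift c φ := by
  obtain ⟨τ₀, hτ₀, hmin⟩ := isCompact_Icc.exists_isMinOn
    (⟨0, by norm_num⟩ : (Icc (0:ℝ) 1).Nonempty)
    ((continuous_norm.comp hc).continuousOn)
  set μ := ‖c τ₀‖ with hμdef
  have hμ : 0 < μ := norm_pos_iff.mpr (hne τ₀)
  have hlb : ∀ τ, μ ≤ ‖c τ‖ := by
    intro τ
    rw [hcl τ]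
    exact hmin (clampI_mem τ)
  have hKuc := isCompact_Icc.uniformContinuousOn_of_continuous
    (hc.continuousOn : ContinuousOn c (Icc (0:ℝ) 1))
  rw [Metric.uniformContinuousOn_iff] at hKuc
  obtain ⟨δ, hδ, hδuc⟩ := hKuc μ hμ
  have key : ∀ a b : ℝ, |a - b| < δ → ‖c a - c b‖ < μ := by
    intro a b hab
    rw [hcl a, hcl b]
    have hda : dist (clampI a) (clampI b) < δ := by
      rw [Real.dist_eq]
      exact lt_of_le_of_lt (clampI_lipschitz a b) hab
    have := hδuc _ (clampI_mem a) _ (clampI_mem b) hda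
    rwa [Complex.dist_eq] at this
  obtain ⟨n, hn⟩ := exists_nat_one_div_lt hδ
  set N : ℕ := n + 1 with hNdef
  have hNpos : (0:ℝ) < (N:ℝ) := by positivity
  have h1N : 1 / (N:ℝ) < δ := by exact_mod_cast hn
  set F : ℝ → ℕ → ℂ := fun τ j => c (min τ ((j:ℝ) / N)) with hFdef
  have hFne : ∀ τ j, F τ j ≠ 0 := fun τ j => hne _
  have hstep : ∀ τ (j : ℕ), ‖F τ (j+1) - F τ j‖ < μ := by
    intro τ j
    apply key
    have h1 : ((j:ℝ)) / N ≤ ((j:ℝ)+1) / N := by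
      apply (div_le_div_iff_of_pos_right hNpos).mpr
      linarith
    have h2 : ((j:ℝ)+1) / N - (j:ℝ)/N = 1 / N := by field_simp; ring
    have h3 := min_sub_min_le (τ := τ) h1
    calc |min τ (((j+1:ℕ):ℝ)/N) - min τ ((j:ℝ)/N)|
        = |min τ (((j:ℝ)+1)/N) - min τ ((j:ℝ)/N)| := by push_cast; ring_nf
      _ ≤ ((j:ℝ)+1)/N - (j:ℝ)/N := h3
      _ = 1 / N := h2
      _ < δ := h1N
  have hre : ∀ τ j, 0 < (F τ (j+1) / F τ j).re := by
    intro τ j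
    exact re_div_pos (hFne τ j) (lt_of_lt_of_le (hstep τ j) (hlb _))
  set φ : ℝ → ℝ := fun τ => Complex.arg (c 0) +
    ∑ j ∈ Finset.range N, Complex.arg (F τ (j+1) / F τ j) with hφdef
  have hFcont : ∀ j : ℕ, Continuous fun τ => F τ j := by
    intro j
    exact hc.comp (continuous_id.min continuous_const)
  have hφcont : Continuous φ := by
    apply continuous_const.add
    apply continuous_finset_sum
    intro j _
    have hr : Continuous fun τ => F τ (j+1) / F τ j :=
      (hFcont (j+1)).div (hFcont j) (fun τ => hFne τ j)
    rw [continuous_iff_continuousAt]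
    intro τ
    show ContinuousAt (Complex.arg ∘ fun τ => F τ (j+1) / F τ j) τ
    exact ContinuousAt.comp (Complex.continuousAt_arg (Or.inl (hre τ j))) hr.continuousAt
  refine ⟨φ, hφcont, ?_⟩
  intro τ
  have hexp : Complex.exp ((φ τ : ℂ) * Complex.I) = c τ / (‖c τ‖ : ℂ) := by
    have hφc : (φ τ : ℂ) * Complex.I = (Complex.arg (c 0) : ℂ) * Complex.I +
        ∑ j ∈ Finset.range N, (Complex.arg (F τ (j+1) / F τ j) : ℂ) * Complex.I := by
      push_cast [hφdef]
      rw [add_mul, Finset.sum_mul]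
    rw [hφc, Complex.exp_add, Complex.exp_sum]
    have hterm : ∀ j ∈ Finset.range N,
        Complex.exp ((Complex.arg (F τ (j+1) / F τ j) : ℂ) * Complex.I)
        = (F τ (j+1) / F τ j) * ((‖F τ j‖ : ℂ) / (‖F τ (j+1)‖ : ℂ)) := by
      intro j _
      rw [expArg (div_ne_zero (hFne τ (j+1)) (hFne τ j)), norm_div]
      push_cast
      field_simp
    rw [Finset.prod_congr rfl hterm, expArg (hne 0), Finset.prod_mul_distrib,
      teleprod (fun j => F τ j) (hFne τ) N]
    have htele2 : ∏ j ∈ Finset.range N,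
        ((‖F τ j‖ : ℂ) / (‖F τ (j+1)‖ : ℂ))
        = (‖F τ 0‖ : ℂ) / (‖F τ N‖ : ℂ) := by
      have := teleprod (fun j => ((‖F τ j‖ : ℂ))⁻¹)
        (fun j => by simpa using norm_ne_zero_iff.mpr (hFne τ j)) N
      calc ∏ j ∈ Finset.range N, ((‖F τ j‖ : ℂ) / (‖F τ (j+1)‖ : ℂ))
          = ∏ j ∈ Finset.range N, (((‖F τ (j+1)‖ : ℂ))⁻¹ / ((‖F τ j‖ : ℂ))⁻¹) := by
            apply Finset.prod_congr rfl
            intro j _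
            exact (inv_div_inv _ _).symm
          _ = ((‖F τ N‖ : ℂ))⁻¹ / ((‖F τ 0‖ : ℂ))⁻¹ := this
          _ = (‖F τ 0‖ : ℂ) / (‖F τ N‖ : ℂ) := inv_div_inv _ _
    rw [htele2]
    -- now identify F τ N and F τ 0 with c τ and c 0 (using clamping)
    have habs0 : (‖c 0‖ : ℂ) ≠ 0 := by simpa using norm_ne_zero_iff.mpr (hne 0)
    have habsτ : (‖c τ‖ : ℂ) ≠ 0 := by simpa using norm_ne_zero_iff.mpr (hne τ)
    have hFN : F τ N = c τ := by
      show c (min τ ((N:ℝ)/N)) = c τ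
      rw [div_self (ne_of_gt hNpos)]
      rcases le_total τ 1 with h | h
      · rw [min_eq_left h]
      · rw [min_eq_right h, hcl τ]
        congr 1
        simp [clampI, max_eq_right (by linarith : (0:ℝ) ≤ τ), min_eq_left h]
    have hF0 : F τ 0 = c (min τ 0) := by
      show c (min τ (((0:ℕ):ℝ) / (N:ℝ))) = c (min τ 0)
      norm_num
    rcases le_total 0 τ with h | h
    · have hF0' : F τ 0 = c 0 := by
        rw [hF0, min_eq_right h]
      rw [hFN, hF0']
      field_simp
      rw [div_eq_iff (hne 0)]
      ring
    · have hτ0 : c τ = c 0 := by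
        rw [hcl τ]
        congr 1
        simp [clampI, max_eq_left h]
      have hF0' : F τ 0 = c τ := by rw [hF0, min_eq_left (le_trans h (by norm_num)), hτ0]
      rw [hFN, hF0', hτ0]
      field_simp
  have habsτ' : (‖c τ‖ : ℂ) ≠ 0 := by
    simpa using norm_ne_zero_iff.mpr (hne τ)
  rw [hexp, mul_comm ((‖c τ‖ : ℂ)) (c τ / (‖c τ‖ : ℂ)),
    div_mul_cancel₀ _ habsτ']
lemma lift_diff_eq {c : ℝ → ℂ} (hne : ∀ τ, c τ ≠ 0) {φ ψ : ℝ → ℝ}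
    (hφ : IsCLift c φ) (hψ : IsCLift c ψ) : φ 1 - φ 0 = ψ 1 - ψ 0 := by
  obtain ⟨hφc, hφe⟩ := hφ
  obtain ⟨hψc, hψe⟩ := hψ
  set d : ℝ → ℝ := fun τ => φ τ - ψ τ with hd
  have hdc : Continuous d := hφc.sub hψc
  have hint : ∀ τ, ∃ k : ℤ, d τ = 2 * Real.pi * k := by
    intro τ
    have habs : (‖c τ‖ : ℂ) ≠ 0 := by
      simpa using norm_ne_zero_iff.mpr (hne τ)
    have h1 : Complex.exp ((φ τ : ℂ) * Complex.I) = Complex.exp ((ψ τ : ℂ) * Complex.I) :=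
      mul_left_cancel₀ habs ((hφe τ).symm.trans (hψe τ))
    have h2 : Complex.exp (((d τ : ℝ) : ℂ) * Complex.I) = 1 := by
      have hh : ((d τ : ℝ) : ℂ) * Complex.I = (φ τ : ℂ) * Complex.I - (ψ τ : ℂ) * Complex.I := by
        push_cast [hd]; ring
      rw [hh, Complex.exp_sub, h1, div_self (Complex.exp_ne_zero _)]
    obtain ⟨k, hk⟩ := Complex.exp_eq_one_iff.mp h2
    refine ⟨k, ?_⟩
    have hI : ((d τ : ℝ) : ℂ) = (((2 * Real.pi * (k:ℝ)) : ℝ) : ℂ) := by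
      have := mul_right_cancel₀ Complex.I_ne_zero (hk.trans (by push_cast; ring :
        ((k:ℂ) * (2 * (Real.pi:ℂ) * Complex.I)) = (((2 * Real.pi * (k:ℝ) : ℝ)) : ℂ) * Complex.I))
      exact this
    exact_mod_cast hI
  have hconst : d 1 = d 0 := by
    by_contra hne'
    obtain ⟨k0, hk0⟩ := hint 0
    obtain ⟨k1, hk1⟩ := hint 1
    have hkk : k0 ≠ k1 := fun h => hne' (by rw [hk1, hk0, h])
    set v : ℝ := 2 * Real.pi * ((min k0 k1 : ℤ) : ℝ) + Real.pi with hv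
    have hsep : (2:ℝ) * Real.pi ≤ |d 1 - d 0| := by
      rw [hk0, hk1, ← mul_sub, abs_mul, _root_.abs_of_pos (by positivity : (0:ℝ) < 2 * Real.pi)]
      have h1 : (1:ℝ) ≤ |(k1 : ℝ) - (k0:ℝ)| := by
        have hcast : ((k1 - k0 : ℤ) : ℝ) = (k1:ℝ) - (k0:ℝ) := by push_cast; ring
        rw [← hcast, ← Int.cast_abs]
        exact_mod_cast Int.one_le_abs (sub_ne_zero.mpr (Ne.symm hkk))
      nlinarith [Real.pi_pos]
    have hmin : min (d 0) (d 1) = 2 * Real.pi * ((min k0 k1 : ℤ):ℝ) := by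
      rcases le_total k0 k1 with h | h
      · rw [min_eq_left h, hk0, hk1, min_eq_left]
        have : ((k0:ℝ)) ≤ (k1:ℝ) := by exact_mod_cast h
        nlinarith [Real.pi_pos]
      · rw [min_eq_right h, hk0, hk1, min_eq_right]
        have : ((k1:ℝ)) ≤ (k0:ℝ) := by exact_mod_cast h
        nlinarith [Real.pi_pos]
    have hgap : min (d 0) (d 1) + 2 * Real.pi ≤ max (d 0) (d 1) := by
      rcases le_total (d 0) (d 1) with h | h
      · rw [min_eq_left h, max_eq_right h]
        rw [_root_.abs_of_nonneg (by linarith : (0:ℝ) ≤ d 1 - d 0)] at hsep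
        linarith
      · rw [min_eq_right h, max_eq_left h]
        rw [_root_.abs_of_nonpos (by linarith : d 1 - d 0 ≤ 0)] at hsep
        linarith
    have hIVT : ∃ τ ∈ Icc (0:ℝ) 1, d τ = v := by
      rcases le_total (d 0) (d 1) with h | h
      · have hsub := intermediate_value_Icc (by norm_num : (0:ℝ) ≤ 1) hdc.continuousOn
        have hvmem : v ∈ Icc (d 0) (d 1) := by
          constructor
          · rw [← min_eq_left h, hmin, hv]
            nlinarith [Real.pi_pos]
          · rw [← max_eq_right h]
            rw [min_eq_left h] at hmin
            rw [hv, ← hmin]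
            nlinarith [Real.pi_pos, hgap, min_eq_left h]
        obtain ⟨τ, hτ, hdv⟩ := hsub hvmem
        exact ⟨τ, hτ, hdv⟩
      · have hsub := intermediate_value_Icc' (by norm_num : (0:ℝ) ≤ 1) hdc.continuousOn
        have hvmem : v ∈ Icc (d 1) (d 0) := by
          constructor
          · rw [← min_eq_right h, hmin, hv]
            nlinarith [Real.pi_pos]
          · rw [← max_eq_left h]
            rw [min_eq_right h] at hmin
            rw [hv, ← hmin]
            nlinarith [Real.pi_pos, hgap, min_eq_right h]
        obtain ⟨τ, hτ, hdv⟩ := hsub hvmem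
        exact ⟨τ, hτ, hdv⟩
    obtain ⟨τ, _, hτv⟩ := hIVT
    obtain ⟨k, hk⟩ := hint τ
    have hkv : v = 2 * Real.pi * (k:ℝ) := by rw [← hτv]; exact hk
    rw [hv] at hkv
    have h3 : Real.pi * (2 * ((min k0 k1 : ℤ):ℝ) + 1) = Real.pi * (2 * (k:ℝ)) := by
      linear_combination hkv
    have h4 := mul_left_cancel₀ Real.pi_ne_zero h3
    have h5 : (2 * (min k0 k1) + 1 : ℤ) = 2 * k := by exact_mod_cast h4
    omega
  have : d 1 = φ 1 - ψ 1 := rfl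
  have h0 : d 0 = φ 0 - ψ 0 := rfl
  linarith [hconst]

-- winding "total angle change" of a loop
open Classical in
noncomputable def wnd (c : ℝ → ℂ) : ℝ :=
  if h : ∃ φ, IsCLift c φ then h.choose 1 - h.choose 0 else 0

lemma wnd_eq {c : ℝ → ℂ} (hne : ∀ τ, c τ ≠ 0) {φ : ℝ → ℝ} (hφ : IsCLift c φ) :
    wnd c = φ 1 - φ 0 := by
  have h : ∃ ψ, IsCLift c ψ := ⟨φ, hφ⟩
  rw [wnd]
  rw [dif_pos h]
  exact lift_diff_eq hne h.choose_spec hφ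

lemma wnd_const (z : ℂ) (hz : z ≠ 0) : wnd (fun _ => z) = 0 := by
  have hφ : IsCLift (fun _ => z) (fun _ => Complex.arg z) :=
    ⟨continuous_const, fun τ => (Complex.norm_mul_exp_arg_mul_I z).symm⟩
  rw [wnd_eq (fun _ => hz) hφ]
  ring
lemma wnd_circle : wnd (fun τ => Complex.exp (((Real.pi/4 - 2*Real.pi*clampI τ : ℝ) : ℂ) * Complex.I))
    = -(2*Real.pi) := by
  set e : ℝ → ℂ := fun τ => Complex.exp (((Real.pi/4 - 2*Real.pi*clampI τ : ℝ) : ℂ) * Complex.I) with he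
  have hne : ∀ τ, e τ ≠ 0 := fun τ => Complex.exp_ne_zero _
  have hφ : IsCLift e (fun τ => Real.pi/4 - 2*Real.pi*clampI τ) := by
    constructor
    · exact continuous_const.sub (continuous_const.mul continuous_clampI)
    · intro τ
      rw [he]
      have : ‖Complex.exp (((Real.pi/4 - 2*Real.pi*clampI τ : ℝ) : ℂ) * Complex.I)‖ = 1 :=
        Complex.norm_exp_ofReal_mul_I _
      rw [this]
      simp
  rw [wnd_eq hne hφ]
  rw [clampI_of_mem (by norm_num), clampI_of_mem (by norm_num)]
  ring

lemma wnd_congr_close {c c' : ℝ → ℂ}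
    (hc : Continuous c) (hc' : Continuous c')
    (hne : ∀ τ, c τ ≠ 0) (hne' : ∀ τ, c' τ ≠ 0)
    (hcl : ∀ τ, c τ = c (clampI τ)) (hcl' : ∀ τ, c' τ = c' (clampI τ))
    (hloop : c 1 = c 0) (hloop' : c' 1 = c' 0)
    (hclose : ∀ τ, ‖c' τ - c τ‖ < ‖c τ‖) :
    wnd c' = wnd c := by
  obtain ⟨φ, hφ⟩ := exists_clift c hc hne hcl
  obtain ⟨φ', hφ'⟩ := exists_clift c' hc' hne' hcl'
  rw [wnd_eq hne hφ, wnd_eq hne' hφ']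
  set r : ℝ → ℂ := fun τ => c' τ / c τ with hr
  have hrne : ∀ τ, r τ ≠ 0 := fun τ => div_ne_zero (hne' τ) (hne τ)
  have hrre : ∀ τ, 0 < (r τ).re := fun τ => re_div_pos (hne τ) (hclose τ)
  have hrc : Continuous r := hc'.div hc hne
  -- two lifts of r
  have hlift1 : IsCLift r (fun τ => φ' τ - φ τ) := by
    refine ⟨hφ'.1.sub hφ.1, fun τ => ?_⟩
    have h1 := hφ.2 τ
    have h2 := hφ'.2 τ
    have habs : (‖c τ‖ : ℂ) ≠ 0 := by simpa using norm_ne_zero_iff.mpr (hne τ)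
    have habs' : (‖c' τ‖ : ℂ) ≠ 0 := by simpa using norm_ne_zero_iff.mpr (hne' τ)
    have hcast : (((φ' τ - φ τ : ℝ)) : ℂ) * Complex.I
        = (φ' τ : ℂ) * Complex.I - (φ τ : ℂ) * Complex.I := by push_cast; ring
    rw [hr]
    show c' τ / c τ = (‖c' τ / c τ‖ : ℂ) * Complex.exp _
    rw [norm_div, hcast, Complex.exp_sub]
    rw [h1, h2, norm_mul, norm_mul, Complex.norm_real, Real.norm_eq_abs, Complex.norm_real, Real.norm_eq_abs,
      Complex.norm_exp_ofReal_mul_I, Complex.norm_exp_ofReal_mul_I,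
      _root_.abs_of_nonneg (norm_nonneg _), _root_.abs_of_nonneg (norm_nonneg _),
      mul_one, mul_one, Complex.ofReal_div, div_mul_div_comm]
  have hlift2 : IsCLift r (fun τ => Complex.arg (r τ)) := by
    constructor
    · rw [continuous_iff_continuousAt]
      intro τ
      show ContinuousAt (Complex.arg ∘ r) τ
      exact ContinuousAt.comp (Complex.continuousAt_arg (Or.inl (hrre τ))) hrc.continuousAt
    · exact fun τ => (Complex.norm_mul_exp_arg_mul_I (r τ)).symm
  have := lift_diff_eq hrne hlift1 hlift2
  have hr10 : r 1 = r 0 := by rw [hr]; simp only [hloop, hloop']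
  rw [hr10] at this
  simp at this
  linarith [this]
lemma wnd_homotopy (h : ℝ → ℝ → ℂ)
    (Hcont : Continuous fun p : ℝ × ℝ => h p.1 p.2)
    (Hne : ∀ u τ, h u τ ≠ 0)
    (Hcl : ∀ u τ, h u τ = h (clampI u) (clampI τ))
    (Hloop : ∀ u, h u 1 = h u 0) :
    wnd (h 1) = wnd (h 0) := by
  have hcu : ∀ u, Continuous (h u) := fun u =>
    Hcont.comp (continuous_const.prodMk continuous_id)
  have hclu : ∀ u τ, h u τ = h u (clampI τ) := by
    intro u τ
    rw [Hcl u τ, Hcl u (clampI τ), clampI_idem]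
  set sq : Set (ℝ × ℝ) := Icc (0:ℝ) 1 ×ˢ Icc (0:ℝ) 1 with hsq
  have hsqc : IsCompact sq := isCompact_Icc.prod isCompact_Icc
  have hsqne : sq.Nonempty := ⟨(0,0), by constructor <;> norm_num⟩
  obtain ⟨p₀, hp₀, hminOn⟩ := hsqc.exists_isMinOn hsqne
    ((continuous_norm.comp Hcont).continuousOn)
  set μ := ‖h p₀.1 p₀.2‖ with hμdef
  have hμ : 0 < μ := norm_pos_iff.mpr (Hne _ _)
  have hlb : ∀ u τ, μ ≤ ‖h u τ‖ := by
    intro u τ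
    rw [Hcl u τ]
    exact hminOn (Set.mk_mem_prod (clampI_mem u) (clampI_mem τ))
  have hUC := hsqc.uniformContinuousOn_of_continuous Hcont.continuousOn
  rw [Metric.uniformContinuousOn_iff] at hUC
  obtain ⟨δ, hδ, hδuc⟩ := hUC μ hμ
  have hloc : ∀ u u' : ℝ, |u' - u| < δ → wnd (h u') = wnd (h u) := by
    intro u u' huu
    apply wnd_congr_close (hcu u) (hcu u') (Hne u) (Hne u') (hclu u) (hclu u')
      (Hloop u) (Hloop u')
    intro τ
    have hd : dist ((clampI u', clampI τ) : ℝ × ℝ) ((clampI u, clampI τ) : ℝ × ℝ) < δ := by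
      rw [Prod.dist_eq]
      apply max_lt
      · rw [Real.dist_eq]
        exact lt_of_le_of_lt (clampI_lipschitz u' u) huu
      · simpa using hδ
    have hkey := hδuc _ (Set.mk_mem_prod (clampI_mem u') (clampI_mem τ)) _
      (Set.mk_mem_prod (clampI_mem u) (clampI_mem τ)) hd
    rw [Complex.dist_eq] at hkey
    calc ‖h u' τ - h u τ‖
        = ‖h (clampI u') (clampI τ) - h (clampI u) (clampI τ)‖ := by
          rw [← Hcl, ← Hcl]
      _ < μ := hkey
      _ ≤ ‖h u τ‖ := hlb u τ
  set S : Set ℝ := {u | wnd (h u) = wnd (h 0)} with hS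
  have hSopen : IsOpen S := by
    rw [Metric.isOpen_iff]
    intro u hu
    refine ⟨δ, hδ, fun u' hu' => ?_⟩
    rw [Set.mem_setOf_eq, ← hu]
    exact hloc u u' (by rwa [Metric.mem_ball, Real.dist_eq] at hu')
  have hScopen : IsOpen Sᶜ := by
    rw [Metric.isOpen_iff]
    intro u hu
    refine ⟨δ, hδ, fun u' hu' => ?_⟩
    intro hmem
    apply hu
    rw [Set.mem_setOf_eq] at hmem ⊢
    rw [← hmem]
    exact (hloc u u' (by rwa [Metric.mem_ball, Real.dist_eq] at hu')).symm
  by_contra hne1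
  have h0S : (0:ℝ) ∈ S := by rw [Set.mem_setOf_eq]
  have h1S : (1:ℝ) ∉ S := hne1
  have hclopen : IsClopen S := ⟨by simpa using hScopen.isClosed_compl, hSopen⟩
  rcases isClopen_iff.mp hclopen with hemp | huniv
  · exact absurd h0S (by rw [hemp]; exact Set.notMem_empty 0)
  · exact h1S (by rw [huniv]; trivial)
def sfun (τ : ℝ) : ℝ := min 1 (max 0 (min (4*τ) (3 - 4*τ)))
def tfun (τ : ℝ) : ℝ := min 1 (max 0 (min (4*τ - 1) (4 - 4*τ)))

lemma continuous_sfun : Continuous sfun := by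
  apply continuous_const.min
  apply continuous_const.max
  exact ((continuous_const.mul continuous_id).min
    (continuous_const.sub (continuous_const.mul continuous_id)))

lemma continuous_tfun : Continuous tfun := by
  apply continuous_const.min
  apply continuous_const.max
  exact (((continuous_const.mul continuous_id).sub continuous_const).min
    (continuous_const.sub (continuous_const.mul continuous_id)))

lemma sfun_eq_zero {τ : ℝ} (h : min (4*τ) (3 - 4*τ) ≤ 0) : sfun τ = 0 := by
  rw [sfun, max_eq_left h, min_eq_right]
  norm_num

lemma sfun_zero_left {τ : ℝ} (h : τ ≤ 0) : sfun τ = 0 :=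
  sfun_eq_zero (le_trans (min_le_left _ _) (by linarith))

lemma sfun_zero_right {τ : ℝ} (h : 3/4 ≤ τ) : sfun τ = 0 :=
  sfun_eq_zero (le_trans (min_le_right _ _) (by linarith))

lemma sfun_one {τ : ℝ} (h1 : 1/4 ≤ τ) (h2 : τ ≤ 1/2) : sfun τ = 1 := by
  have hmin : (1:ℝ) ≤ min (4*τ) (3 - 4*τ) := le_min (by linarith) (by linarith)
  rw [sfun, max_eq_right (by linarith), min_eq_left hmin]

lemma tfun_eq_zero {τ : ℝ} (h : min (4*τ - 1) (4 - 4*τ) ≤ 0) : tfun τ = 0 := by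
  rw [tfun, max_eq_left h, min_eq_right]
  norm_num

lemma tfun_zero_left {τ : ℝ} (h : τ ≤ 1/4) : tfun τ = 0 :=
  tfun_eq_zero (le_trans (min_le_left _ _) (by linarith))

lemma tfun_zero_right {τ : ℝ} (h : 1 ≤ τ) : tfun τ = 0 :=
  tfun_eq_zero (le_trans (min_le_right _ _) (by linarith))

lemma tfun_one {τ : ℝ} (h1 : 1/2 ≤ τ) (h2 : τ ≤ 3/4) : tfun τ = 1 := by
  have hmin : (1:ℝ) ≤ min (4*τ - 1) (4 - 4*τ) := le_min (by linarith) (by linarith)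
  rw [tfun, max_eq_right (by linarith), min_eq_left hmin]

lemma sfun_clamp (τ : ℝ) : sfun (clampI τ) = sfun τ := by
  rcases le_total τ 0 with h | h
  · rw [sfun_zero_left h]
    have : clampI τ = 0 := by
      rw [clampI, max_eq_left h]
      norm_num
    rw [this, sfun_zero_left (le_refl 0)]
  · rcases le_total τ 1 with h' | h'
    · rw [clampI_of_mem ⟨h, h'⟩]
    · have : clampI τ = 1 := by
        rw [clampI, max_eq_right (by linarith), min_eq_left h']
      rw [this, sfun_zero_right (by norm_num), sfun_zero_right (by linarith)]

lemma tfun_clamp (τ : ℝ) : tfun (clampI τ) = tfun τ := by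
  rcases le_total τ 0 with h | h
  · have hcl : clampI τ = 0 := by
      rw [clampI, max_eq_left h]
      norm_num
    rw [hcl, tfun_zero_left (by norm_num : (0:ℝ) ≤ 1/4), tfun_zero_left (by linarith : τ ≤ 1/4)]
  · rcases le_total τ 1 with h' | h'
    · rw [clampI_of_mem ⟨h, h'⟩]
    · have : clampI τ = 1 := by
        rw [clampI, max_eq_right (by linarith), min_eq_left h']
      rw [this, tfun_zero_right (le_refl 1), tfun_zero_right h']

lemma sfun_mem (τ : ℝ) : sfun τ ∈ Icc (0:ℝ) 1 :=
  ⟨le_min (by norm_num) (le_max_left _ _), min_le_left _ _⟩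

lemma tfun_mem (τ : ℝ) : tfun τ ∈ Icc (0:ℝ) 1 :=
  ⟨le_min (by norm_num) (le_max_left _ _), min_le_left _ _⟩
lemma convex_pos {u p q : ℝ} (hu0 : 0 ≤ u) (hu1 : u ≤ 1) (hp : 0 < p) (hq : 0 < q) :
    0 < (1 - u) * p + u * q := by
  rcases lt_or_eq_of_le hu1 with h | h
  · have h1 : 0 < (1 - u) * p := mul_pos (by linarith) hp
    have h2 : 0 ≤ u * q := mul_nonneg hu0 hq.le
    linarith
  · subst h
    simpa using hq

lemma no_crossing (a b : ℝ → ℂ)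
    (ha : Continuous a) (hb : Continuous b)
    (hacl : ∀ s, a s = a (clampI s)) (hbcl : ∀ t, b t = b (clampI t))
    (hne : ∀ s t : ℝ, a s ≠ b t)
    (htop : ∀ t, 0 < (a 0 - b t).im)
    (hbot : ∀ t, (a 1 - b t).im < 0)
    (hleft : ∀ s, 0 < (a s - b 0).re)
    (hright : ∀ s, (a s - b 1).re < 0) : False := by
  set c : ℝ → ℂ := fun τ => a (sfun τ) - b (tfun τ) with hcdef
  set e : ℝ → ℂ := fun τ =>
    Complex.exp (((Real.pi/4 - 2*Real.pi*clampI τ : ℝ) : ℂ) * Complex.I) with hedef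
  have hccont : Continuous c := (ha.comp continuous_sfun).sub (hb.comp continuous_tfun)
  have hcne : ∀ τ, c τ ≠ 0 := fun τ => sub_ne_zero.mpr (hne _ _)
  have hccl : ∀ τ, c τ = c (clampI τ) := by
    intro τ
    show a (sfun τ) - b (tfun τ) = a (sfun (clampI τ)) - b (tfun (clampI τ))
    rw [sfun_clamp, tfun_clamp]
  have hcloop : c 1 = c 0 := by
    show a (sfun 1) - b (tfun 1) = a (sfun 0) - b (tfun 0)
    rw [sfun_zero_right (by norm_num), sfun_zero_left (le_refl 0),
      tfun_zero_right (le_refl 1), tfun_zero_left (by norm_num)]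
  have hecont : Continuous e := by
    apply Continuous.cexp
    exact (Complex.continuous_ofReal.comp
      (continuous_const.sub (continuous_const.mul continuous_clampI))).mul continuous_const
  have hene : ∀ τ, e τ ≠ 0 := fun τ => Complex.exp_ne_zero _
  have hecl : ∀ τ, e τ = e (clampI τ) := by
    intro τ
    show Complex.exp _ = Complex.exp _
    rw [clampI_idem]
  have heloop : e 1 = e 0 := by
    show Complex.exp _ = Complex.exp _
    rw [clampI_of_mem (by norm_num : (1:ℝ) ∈ Icc (0:ℝ) 1),
      clampI_of_mem (by norm_num : (0:ℝ) ∈ Icc (0:ℝ) 1)]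
    have h1 : ((Real.pi/4 - 2*Real.pi*1 : ℝ) : ℂ) * Complex.I
        = ((Real.pi/4 - 2*Real.pi*0 : ℝ) : ℂ) * Complex.I - 2*Real.pi*Complex.I := by
      push_cast
      ring
    rw [h1, Complex.exp_sub]
    have h2 : Complex.exp (2*(Real.pi:ℂ)*Complex.I) = 1 := by
      exact_mod_cast Complex.exp_two_pi_mul_I
    rw [h2, div_one]
  -- Step 1 : wnd c = 0 via contraction
  have hwnd0 : wnd c = 0 := by
    set H : ℝ → ℝ → ℂ := fun u τ =>
      a ((1 - clampI u) * sfun τ + clampI u * (1/2)) -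
      b ((1 - clampI u) * tfun τ + clampI u * (1/2)) with hHdef
    have hHcont : Continuous fun p : ℝ × ℝ => H p.1 p.2 := by
      have hcu : Continuous fun p : ℝ × ℝ => clampI p.1 :=
        continuous_clampI.comp continuous_fst
      have hst : Continuous fun p : ℝ × ℝ => sfun p.2 := continuous_sfun.comp continuous_snd
      have htt : Continuous fun p : ℝ × ℝ => tfun p.2 := continuous_tfun.comp continuous_snd
      exact (ha.comp (((continuous_const.sub hcu).mul hst).add
          (hcu.mul continuous_const))).sub
        (hb.comp (((continuous_const.sub hcu).mul htt).add (hcu.mul continuous_const)))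
    have hHne : ∀ u τ, H u τ ≠ 0 := fun u τ => sub_ne_zero.mpr (hne _ _)
    have hHcl : ∀ u τ, H u τ = H (clampI u) (clampI τ) := by
      intro u τ
      show a _ - b _ = a _ - b _
      rw [clampI_idem, sfun_clamp, tfun_clamp]
    have hHloop : ∀ u, H u 1 = H u 0 := by
      intro u
      show a _ - b _ = a _ - b _
      rw [sfun_zero_right (by norm_num), sfun_zero_left (le_refl 0),
        tfun_zero_right (le_refl 1), tfun_zero_left (by norm_num)]
    have h10 := wnd_homotopy H hHcont hHne hHcl hHloop
    have hH0 : H 0 = c := by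
      funext τ
      show a _ - b _ = a (sfun τ) - b (tfun τ)
      have h0 : clampI 0 = 0 := clampI_of_mem (by norm_num)
      rw [h0]
      norm_num
    have hH1const : wnd (H 1) = 0 := by
      have h1 : clampI 1 = 1 := clampI_of_mem (by norm_num)
      have : H 1 = fun _ => a (1/2) - b (1/2) := by
        funext τ
        show a _ - b _ = a (1/2) - b (1/2)
        rw [h1]
        norm_num
      rw [this]
      exact wnd_const _ (sub_ne_zero.mpr (hne _ _))
    rw [hH0] at h10
    rw [← h10, hH1const]
  -- Step 2 : wnd c = wnd e = -2π via linear homotopy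
  have hwnd2 : wnd c = -(2*Real.pi) := by
    set H : ℝ → ℝ → ℂ := fun u τ =>
      ((1 - clampI u : ℝ) : ℂ) * c τ + ((clampI u : ℝ) : ℂ) * e τ with hHdef
    have hHcont : Continuous fun p : ℝ × ℝ => H p.1 p.2 := by
      have hcu : Continuous fun p : ℝ × ℝ => clampI p.1 :=
        continuous_clampI.comp continuous_fst
      exact ((Complex.continuous_ofReal.comp (continuous_const.sub hcu)).mul
          (hccont.comp continuous_snd)).add
        ((Complex.continuous_ofReal.comp hcu).mul (hecont.comp continuous_snd))
    have hHcl : ∀ u τ, H u τ = H (clampI u) (clampI τ) := by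
      intro u τ
      show _ = _
      rw [hHdef]
      simp only
      rw [clampI_idem, ← hccl, ← hecl]
    have hHloop : ∀ u, H u 1 = H u 0 := by
      intro u
      show _ = _
      rw [hHdef]
      simp only
      rw [hcloop, heloop]
    -- nonvanishing
    have hHne : ∀ u τ, H u τ ≠ 0 := by
      have hkey : ∀ u ∈ Icc (0:ℝ) 1, ∀ τ ∈ Icc (0:ℝ) 1,
          ((1 - u : ℝ) : ℂ) * c τ + ((u : ℝ) : ℂ) * e τ ≠ 0 := by
        intro u hu τ hτ
        have hu0 := hu.1
        have hu1 := hu.2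
        have hτc : clampI τ = τ := clampI_of_mem hτ
        have hpi := Real.pi_pos
        -- case analysis on τ
        rcases le_total τ (1/4) with hq1 | hq1
        · -- Re c > 0, Re e > 0
          have hrc : 0 < (c τ).re := by
            show 0 < (a (sfun τ) - b (tfun τ)).re
            rw [tfun_zero_left hq1]
            exact hleft _
          have hre : 0 < (e τ).re := by
            show 0 < (Complex.exp _).re
            rw [Complex.exp_ofReal_mul_I_re, hτc]
            apply Real.cos_pos_of_mem_Ioo
            constructor <;> nlinarith [hτ.1]
          intro h0
          have := congrArg Complex.re h0
          rw [Complex.add_re, Complex.re_ofReal_mul, Complex.re_ofReal_mul] at this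
          simp only [Complex.zero_re] at this
          linarith [convex_pos hu0 hu1 hrc hre]
        rcases le_total τ (1/2) with hq2 | hq2
        · -- Im c < 0, Im e < 0
          have hrc : (c τ).im < 0 := by
            show (a (sfun τ) - b (tfun τ)).im < 0
            rw [sfun_one hq1 hq2]
            exact hbot _
          have hre : (e τ).im < 0 := by
            show (Complex.exp _).im < 0
            rw [Complex.exp_ofReal_mul_I_im, hτc]
            apply Real.sin_neg_of_neg_of_neg_pi_lt <;> nlinarith
          intro h0
          have := congrArg Complex.im h0
          rw [Complex.add_im, Complex.im_ofReal_mul, Complex.im_ofReal_mul] at this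
          simp only [Complex.zero_im] at this
          linarith [convex_pos hu0 hu1 (neg_pos.mpr hrc) (neg_pos.mpr hre)]
        rcases le_total τ (3/4) with hq3 | hq3
        · -- Re c < 0, Re e < 0
          have hrc : (c τ).re < 0 := by
            show (a (sfun τ) - b (tfun τ)).re < 0
            rw [tfun_one hq2 hq3]
            exact hright _
          have hre : (e τ).re < 0 := by
            show (Complex.exp _).re < 0
            rw [Complex.exp_ofReal_mul_I_re, hτc]
            rw [← Real.cos_add_two_pi]
            apply Real.cos_neg_of_pi_div_two_lt_of_lt <;> nlinarith
          intro h0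
          have := congrArg Complex.re h0
          rw [Complex.add_re, Complex.re_ofReal_mul, Complex.re_ofReal_mul] at this
          simp only [Complex.zero_re] at this
          linarith [convex_pos hu0 hu1 (neg_pos.mpr hrc) (neg_pos.mpr hre)]
        · -- Im c > 0, Im e > 0
          have hrc : 0 < (c τ).im := by
            show 0 < (a (sfun τ) - b (tfun τ)).im
            rw [sfun_zero_right hq3]
            exact htop _
          have hre : 0 < (e τ).im := by
            show 0 < (Complex.exp _).im
            rw [Complex.exp_ofReal_mul_I_im, hτc]
            rw [← Real.sin_add_two_pi]
            apply Real.sin_pos_of_pos_of_lt_pi <;> nlinarith [hτ.2]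
          intro h0
          have := congrArg Complex.im h0
          rw [Complex.add_im, Complex.im_ofReal_mul, Complex.im_ofReal_mul] at this
          simp only [Complex.zero_im] at this
          linarith [convex_pos hu0 hu1 hrc hre]
      intro u τ
      rw [hHcl u τ]
      have h1 : clampI (clampI u) = clampI u := clampI_idem u
      have := hkey (clampI u) (clampI_mem u) (clampI τ) (clampI_mem τ)
      show ((1 - clampI (clampI u) : ℝ) : ℂ) * c (clampI τ) + _ * e (clampI τ) ≠ 0
      rw [h1, ← hccl, ← hecl]
      rw [← hccl, ← hecl] at this
      exact this
    have h10 := wnd_homotopy H hHcont hHne hHcl hHloop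
    have hH0 : H 0 = c := by
      funext τ
      show ((1 - clampI 0 : ℝ) : ℂ) * c τ + ((clampI 0 : ℝ) : ℂ) * e τ = c τ
      rw [clampI_of_mem (by norm_num : (0:ℝ) ∈ Icc (0:ℝ) 1)]
      push_cast
      ring
    have hH1 : H 1 = e := by
      funext τ
      show ((1 - clampI 1 : ℝ) : ℂ) * c τ + ((clampI 1 : ℝ) : ℂ) * e τ = e τ
      rw [clampI_of_mem (by norm_num : (1:ℝ) ∈ Icc (0:ℝ) 1)]
      push_cast
      ring
    rw [hH0, hH1] at h10
    rw [← h10]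
    exact wnd_circle
  rw [hwnd0] at hwnd2
  have := Real.pi_pos
  linarith
end StripSepAux

open scoped RealInnerProductSpace
open Set

/-- a closed connected set `θ ⊂ ℝ²` contained in the strip `m ≤ ⟨z, v⊥⟩ ≤ M`
and meeting every line parallel to `v⊥` separates the plane: the complement of `θ` has at
least two distinct unbounded connected components, one containing the half-plane
`⟨z, v⊥⟩ > M` and one containing `⟨z, v⊥⟩ < m`. -/
theorem strip_spanning_set_separates
    (v vperp : EuclideanSpace ℝ (Fin 2)) (hv : ‖v‖ = 1)
    (hvperp : vperp = ![-(v 1), v 0])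
    (θ : Set (EuclideanSpace ℝ (Fin 2))) (hclosed : IsClosed θ) (hconn : IsConnected θ)
    (m M : ℝ) (hmM : m < M)
    (hstrip : ∀ z ∈ θ, ⟪z, vperp⟫ ∈ Set.Icc m M)
    (hspan : ∀ w : EuclideanSpace ℝ (Fin 2), ∃ t : ℝ, w + t • vperp ∈ θ) :
    ∀ x y : EuclideanSpace ℝ (Fin 2), M < ⟪x, vperp⟫ → ⟪y, vperp⟫ < m →
      connectedComponentIn θᶜ x ≠ connectedComponentIn θᶜ y ∧
      {z : EuclideanSpace ℝ (Fin 2) | M < ⟪z, vperp⟫} ⊆ connectedComponentIn θᶜ x ∧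
      {z : EuclideanSpace ℝ (Fin 2) | ⟪z, vperp⟫ < m} ⊆ connectedComponentIn θᶜ y ∧
      ¬ Bornology.IsBounded (connectedComponentIn θᶜ x) ∧
      ¬ Bornology.IsBounded (connectedComponentIn θᶜ y) := by
  intro x y hx hy
  -- coordinates of vperp
  have hvp0 : vperp 0 = -(v 1) := by rw [hvperp]; rfl
  have hvp1 : vperp 1 = v 0 := by rw [hvperp]; rfl
  have hinner : ∀ z w : EuclideanSpace ℝ (Fin 2), ⟪z, w⟫ = z 0 * w 0 + z 1 * w 1 := by
    intro z w
    rw [PiLp.inner_apply, Fin.sum_univ_two]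
    simp [RCLike.inner_apply, starRingEnd_apply]
    ring
  have hv2 : v 0 ^ 2 + v 1 ^ 2 = 1 := by
    have h := hv
    rw [EuclideanSpace.norm_eq, Fin.sum_univ_two] at h
    have h2 : (Real.sqrt (‖v 0‖^2 + ‖v 1‖^2))^2 = 1^2 := by rw [h]
    rw [Real.sq_sqrt (by positivity)] at h2
    simpa [Real.norm_eq_abs, sq_abs] using h2
  have hvv : ⟪v, v⟫ = 1 := by rw [hinner]; nlinarith [hv2]
  have hvpv : ⟪vperp, v⟫ = 0 := by rw [hinner, hvp0, hvp1]; ring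
  have hvpvp : ⟪vperp, vperp⟫ = 1 := by rw [hinner, hvp0, hvp1]; nlinarith [hv2]
  have hnormvp : ‖vperp‖ = 1 := by
    nlinarith [real_inner_self_eq_norm_mul_norm vperp, norm_nonneg vperp, hvpvp]
  -- injectivity of (g, f)
  have hTinj : ∀ z w : EuclideanSpace ℝ (Fin 2),
      ⟪z, v⟫ = ⟪w, v⟫ → ⟪z, vperp⟫ = ⟪w, vperp⟫ → z = w := by
    intro z w h1 h2
    rw [hinner z v, hinner w v] at h1
    rw [hinner z vperp, hinner w vperp, hvp0, hvp1] at h2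
    have hd0 : (z 0 - w 0) * (v 0 ^ 2 + v 1 ^ 2) = 0 := by linear_combination v 0 * h1 - v 1 * h2
    have hd1 : (z 1 - w 1) * (v 0 ^ 2 + v 1 ^ 2) = 0 := by linear_combination v 1 * h1 + v 0 * h2
    rw [hv2, mul_one] at hd0 hd1
    ext i
    fin_cases i
    · show z 0 = w 0
      linarith
    · show z 1 = w 1
      linarith
  -- half planes
  have hlin : IsLinearMap ℝ (fun z : EuclideanSpace ℝ (Fin 2) => ⟪z, vperp⟫) :=
    ⟨fun a b => inner_add_left _ _ _, fun r a => real_inner_smul_left _ _ _⟩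
  have hconvtop : Convex ℝ {z : EuclideanSpace ℝ (Fin 2) | M < ⟪z, vperp⟫} :=
    convex_halfSpace_gt hlin M
  have hconvbot : Convex ℝ {z : EuclideanSpace ℝ (Fin 2) | ⟪z, vperp⟫ < m} :=
    convex_halfSpace_lt hlin m
  have htopcompl : {z : EuclideanSpace ℝ (Fin 2) | M < ⟪z, vperp⟫} ⊆ θᶜ := by
    intro z hz hzθ
    exact absurd (hstrip z hzθ).2 (not_le.mpr hz)
  have hbotcompl : {z : EuclideanSpace ℝ (Fin 2) | ⟪z, vperp⟫ < m} ⊆ θᶜ := by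
    intro z hz hzθ
    exact absurd (hstrip z hzθ).1 (not_le.mpr hz)
  have htopsub : {z : EuclideanSpace ℝ (Fin 2) | M < ⟪z, vperp⟫} ⊆ connectedComponentIn θᶜ x :=
    hconvtop.isPreconnected.subset_connectedComponentIn hx htopcompl
  have hbotsub : {z : EuclideanSpace ℝ (Fin 2) | ⟪z, vperp⟫ < m} ⊆ connectedComponentIn θᶜ y :=
    hconvbot.isPreconnected.subset_connectedComponentIn hy hbotcompl
  -- unboundedness
  have hunbtop : ¬ Bornology.IsBounded (connectedComponentIn θᶜ x) := by
    intro hb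
    obtain ⟨r, hr⟩ := hb.subset_closedBall 0
    set t : ℝ := |r| + ‖x‖ + 1 with ht
    have htpos : 0 < t := by positivity
    have hmem : x + t • vperp ∈ {z : EuclideanSpace ℝ (Fin 2) | M < ⟪z, vperp⟫} := by
      show M < ⟪x + t • vperp, vperp⟫
      rw [inner_add_left, real_inner_smul_left, hvpvp, mul_one]
      linarith
    have hball := hr (htopsub hmem)
    rw [Metric.mem_closedBall, dist_zero_right] at hball
    have h1 : ‖t • vperp‖ ≤ ‖x + t • vperp‖ + ‖x‖ := by
      calc ‖t • vperp‖ = ‖(x + t • vperp) - x‖ := by rw [add_sub_cancel_left]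
        _ ≤ ‖x + t • vperp‖ + ‖x‖ := norm_sub_le _ _
    rw [norm_smul, hnormvp, mul_one, Real.norm_eq_abs, abs_of_pos htpos] at h1
    have := le_abs_self r
    linarith
  have hunbbot : ¬ Bornology.IsBounded (connectedComponentIn θᶜ y) := by
    intro hb
    obtain ⟨r, hr⟩ := hb.subset_closedBall 0
    set t : ℝ := -(|r| + ‖y‖ + 1) with ht
    have hmem : y + t • vperp ∈ {z : EuclideanSpace ℝ (Fin 2) | ⟪z, vperp⟫ < m} := by
      show ⟪y + t • vperp, vperp⟫ < m
      rw [inner_add_left, real_inner_smul_left, hvpvp, mul_one]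
      have htneg : t < 0 := by
        rw [ht]
        have : (0:ℝ) < |r| + ‖y‖ + 1 := by positivity
        linarith
      linarith
    have hball := hr (hbotsub hmem)
    rw [Metric.mem_closedBall, dist_zero_right] at hball
    have h1 : ‖t • vperp‖ ≤ ‖y + t • vperp‖ + ‖y‖ := by
      calc ‖t • vperp‖ = ‖(y + t • vperp) - y‖ := by rw [add_sub_cancel_left]
        _ ≤ ‖y + t • vperp‖ + ‖y‖ := norm_sub_le _ _
    rw [norm_smul, hnormvp, mul_one, Real.norm_eq_abs] at h1
    have habs : |t| = |r| + ‖y‖ + 1 := by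
      rw [ht, abs_neg, abs_of_pos (by positivity)]
    rw [habs] at h1
    have := le_abs_self r
    linarith
  refine ⟨?_, htopsub, hbotsub, hunbtop, hunbbot⟩
  intro hEq
  have hxc : x ∈ θᶜ := htopcompl hx
  have hyc : y ∈ θᶜ := hbotcompl hy
  have hyC : y ∈ connectedComponentIn θᶜ x := by
    rw [hEq]
    exact mem_connectedComponentIn hyc
  have hCopen : IsOpen (connectedComponentIn θᶜ x) := hclosed.isOpen_compl.connectedComponentIn
  have hCconn : IsConnected (connectedComponentIn θᶜ x) :=
    isConnected_connectedComponentIn_iff.mpr hxc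
  have hCpath : IsPathConnected (connectedComponentIn θᶜ x) :=
    hCopen.isConnected_iff_isPathConnected.mp hCconn
  obtain ⟨γ, hγ⟩ := hCpath.joinedIn x (mem_connectedComponentIn hxc) y hyC
  have hγcl : ∀ τ : ℝ, γ.extend τ = γ.extend (clampI τ) := by
    intro τ
    rcases le_total τ 0 with h | h
    · have h2 : clampI τ = 0 := by rw [clampI, max_eq_left h]; norm_num
      rw [h2, Path.extend_of_le_zero γ h, Path.extend_of_le_zero γ (le_refl 0)]
    · rcases le_total τ 1 with h' | h'
      · rw [clampI_of_mem ⟨h, h'⟩]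
      · have h2 : clampI τ = 1 := by rw [clampI, max_eq_right (by linarith), min_eq_left h']
        rw [h2, Path.extend_of_one_le γ h', Path.extend_of_one_le γ (le_refl 1)]
  have hγC : ∀ τ : ℝ, γ.extend τ ∈ connectedComponentIn θᶜ x := by
    intro τ
    rcases le_total τ 0 with h | h
    · rw [Path.extend_of_le_zero γ h]
      exact mem_connectedComponentIn hxc
    · rcases le_total τ 1 with h' | h'
      · rw [γ.extend_apply ⟨h, h'⟩]
        exact hγ _
      · rw [Path.extend_of_one_le γ h']
        exact hyC
  set K := γ.extend '' (Icc (0:ℝ) 1) with hK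
  have hKcomp : IsCompact K := isCompact_Icc.image γ.continuous_extend
  have hγK : ∀ τ : ℝ, γ.extend τ ∈ K := by
    intro τ
    rw [hγcl τ]
    exact Set.mem_image_of_mem _ (clampI_mem τ)
  have hKdisj : Disjoint K θ := by
    rw [Set.disjoint_left]
    rintro z ⟨τ, hτ, rfl⟩ hzθ
    exact (connectedComponentIn_subset θᶜ x) (hγC τ) hzθ
  obtain ⟨ε₀, hε₀, hthick⟩ := hKdisj.exists_thickenings hKcomp hclosed
  set ε := min ε₀ (min ((⟪x, vperp⟫ - M)/2) ((m - ⟪y, vperp⟫)/2)) with hεdef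
  have hεpos : 0 < ε := lt_min hε₀ (lt_min (by linarith) (by linarith))
  have hεx : ε ≤ (⟪x, vperp⟫ - M)/2 := (min_le_right _ _).trans (min_le_left _ _)
  have hεy : ε ≤ (m - ⟪y, vperp⟫)/2 := (min_le_right _ _).trans (min_le_right _ _)
  set V := Metric.thickening ε θ with hV
  have hθV : θ ⊆ V := Metric.self_subset_thickening hεpos θ
  have hVK : ∀ z ∈ V, z ∉ K := by
    intro z hzV hzK
    have h1 : z ∈ Metric.thickening ε₀ θ := Metric.thickening_mono (min_le_left _ _) θ hzV
    have h2 : z ∈ Metric.thickening ε₀ K := Metric.self_subset_thickening hε₀ K hzK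
    exact Set.disjoint_left.mp hthick h2 h1
  obtain ⟨z₀, hz₀⟩ := hconn.nonempty
  have hVpre : IsPreconnected V := by
    have hsU : ⋃₀ ((fun p => Metric.ball p ε ∪ θ) '' θ) = V := by
      apply Set.Subset.antisymm
      · rintro z ⟨S, ⟨p, hp, rfl⟩, hzS⟩
        rcases hzS with hzb | hzθ
        · exact Metric.mem_thickening_iff.mpr ⟨p, hp, Metric.mem_ball.mp hzb⟩
        · exact hθV hzθ
      · intro z hz
        obtain ⟨p, hp, hd⟩ := Metric.mem_thickening_iff.mp hz
        exact ⟨Metric.ball p ε ∪ θ, ⟨p, hp, rfl⟩, Or.inl (Metric.mem_ball.mpr hd)⟩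
    rw [← hsU]
    apply isPreconnected_sUnion z₀
    · rintro S ⟨p, hp, rfl⟩
      exact Or.inr hz₀
    · rintro S ⟨p, hp, rfl⟩
      exact IsPreconnected.union p (Metric.mem_ball_self hεpos) hp
        (convex_ball p ε).isPreconnected hconn.isPreconnected
  have hVopen : IsOpen V := Metric.isOpen_thickening
  have hVconn : IsConnected V := ⟨⟨z₀, hθV hz₀⟩, hVpre⟩
  have hVpath : IsPathConnected V := hVopen.isConnected_iff_isPathConnected.mp hVconn
  have hVf : ∀ z ∈ V, m - ε < ⟪z, vperp⟫ ∧ ⟪z, vperp⟫ < M + ε := by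
    intro z hz
    obtain ⟨p, hpθ, hd⟩ := Metric.mem_thickening_iff.mp hz
    have hfl : |⟪z, vperp⟫ - ⟪p, vperp⟫| ≤ dist z p := by
      rw [dist_eq_norm, ← inner_sub_left]
      calc |⟪z - p, vperp⟫| ≤ ‖z - p‖ * ‖vperp‖ := abs_real_inner_le_norm _ _
        _ = ‖z - p‖ := by rw [hnormvp, mul_one]
    have h2 := abs_lt.mp (lt_of_le_of_lt hfl hd)
    exact ⟨by linarith [(hstrip p hpθ).1, h2.1], by linarith [(hstrip p hpθ).2, h2.2]⟩
  obtain ⟨r, hr⟩ := hKcomp.isBounded.subset_closedBall 0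
  have hKg : ∀ τ : ℝ, |⟪γ.extend τ, v⟫| ≤ |r| := by
    intro τ
    have h1 : ‖γ.extend τ‖ ≤ r := by
      have := hr (hγK τ)
      rwa [Metric.mem_closedBall, dist_zero_right] at this
    calc |⟪γ.extend τ, v⟫| ≤ ‖γ.extend τ‖ * ‖v‖ := abs_real_inner_le_norm _ _
      _ = ‖γ.extend τ‖ := by rw [hv, mul_one]
      _ ≤ r := h1
      _ ≤ |r| := le_abs_self r
  obtain ⟨tm, hpm⟩ := hspan ((-(|r| + 1)) • v)
  obtain ⟨tp, hpp⟩ := hspan ((|r| + 1) • v)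
  have hgpm : ⟪(-(|r| + 1)) • v + tm • vperp, v⟫ = -(|r| + 1) := by
    rw [inner_add_left, real_inner_smul_left, real_inner_smul_left, hvv, hvpv]
    ring
  have hgpp : ⟪(|r| + 1) • v + tp • vperp, v⟫ = |r| + 1 := by
    rw [inner_add_left, real_inner_smul_left, real_inner_smul_left, hvv, hvpv]
    ring
  obtain ⟨δp, hδp⟩ := hVpath.joinedIn _ (hθV hpm) _ (hθV hpp)
  have hδcl : ∀ τ : ℝ, δp.extend τ = δp.extend (clampI τ) := by
    intro τ
    rcases le_total τ 0 with h | h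
    · have h2 : clampI τ = 0 := by rw [clampI, max_eq_left h]; norm_num
      rw [h2, Path.extend_of_le_zero δp h, Path.extend_of_le_zero δp (le_refl 0)]
    · rcases le_total τ 1 with h' | h'
      · rw [clampI_of_mem ⟨h, h'⟩]
      · have h2 : clampI τ = 1 := by rw [clampI, max_eq_right (by linarith), min_eq_left h']
        rw [h2, Path.extend_of_one_le δp h', Path.extend_of_one_le δp (le_refl 1)]
  have hδV : ∀ τ : ℝ, δp.extend τ ∈ V := by
    intro τ
    rcases le_total τ 0 with h | h
    · rw [Path.extend_of_le_zero δp h]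
      exact hθV hpm
    · rcases le_total τ 1 with h' | h'
      · rw [δp.extend_apply ⟨h, h'⟩]
        exact hδp _
      · rw [Path.extend_of_one_le δp h']
        exact hθV hpp
  set T : EuclideanSpace ℝ (Fin 2) → ℂ :=
    fun z => ((⟪z, v⟫ : ℝ) : ℂ) + ((⟪z, vperp⟫ : ℝ) : ℂ) * Complex.I with hT
  have hTre : ∀ z w : EuclideanSpace ℝ (Fin 2), (T z - T w).re = ⟪z, v⟫ - ⟪w, v⟫ := by
    intro z w
    simp [hT]
  have hTim : ∀ z w : EuclideanSpace ℝ (Fin 2), (T z - T w).im = ⟪z, vperp⟫ - ⟪w, vperp⟫ := by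
    intro z w
    simp [hT]
  have hTcont : Continuous T := by
    apply Continuous.add
    · exact Complex.continuous_ofReal.comp (continuous_id.inner continuous_const)
    · exact (Complex.continuous_ofReal.comp
        (continuous_id.inner continuous_const)).mul continuous_const
  refine no_crossing (fun s => T (γ.extend s)) (fun t => T (δp.extend t))
    (hTcont.comp γ.continuous_extend) (hTcont.comp δp.continuous_extend)
    (fun s => congrArg T (hγcl s)) (fun t => congrArg T (hδcl t)) ?_ ?_ ?_ ?_ ?_
  · -- injectivity / disjointness
    intro s t hst
    have hst' : T (γ.extend s) = T (δp.extend t) := hst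
    have hre : ⟪γ.extend s, v⟫ = ⟪δp.extend t, v⟫ := by
      have h0 : (T (γ.extend s) - T (δp.extend t)).re = 0 := by rw [hst']; simp
      rw [hTre] at h0
      linarith
    have him : ⟪γ.extend s, vperp⟫ = ⟪δp.extend t, vperp⟫ := by
      have h0 : (T (γ.extend s) - T (δp.extend t)).im = 0 := by rw [hst']; simp
      rw [hTim] at h0
      linarith
    have hzw : γ.extend s = δp.extend t := hTinj _ _ hre him
    exact hVK (δp.extend t) (hδV t) (hzw ▸ hγK s)
  · -- top : im positive on s = 0 edge
    intro t
    have h1 := (hVf _ (hδV t)).2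
    have h2 : γ.extend 0 = x := by
      rw [Path.extend_zero]
    show 0 < (T (γ.extend 0) - T (δp.extend t)).im
    rw [hTim, h2]
    linarith
  · -- bottom : im negative on s = 1 edge
    intro t
    have h1 := (hVf _ (hδV t)).1
    have h2 : γ.extend 1 = y := by
      rw [Path.extend_one]
    show (T (γ.extend 1) - T (δp.extend t)).im < 0
    rw [hTim, h2]
    linarith
  · -- left : re positive on t = 0 edge
    intro s
    have h2 : δp.extend 0 = (-(|r| + 1)) • v + tm • vperp := by
      rw [Path.extend_zero]
    show 0 < (T (γ.extend s) - T (δp.extend 0)).re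
    rw [hTre, h2, hgpm]
    linarith [(abs_le.mp (hKg s)).1]
  · -- right : re negative on t = 1 edge
    intro s
    have h2 : δp.extend 1 = (|r| + 1) • v + tp • vperp := by
      rw [Path.extend_one]
    show (T (γ.extend s) - T (δp.extend 1)).re < 0
    rw [hTre, h2, hgpp]
    linarith [(abs_le.mp (hKg s)).2]
end
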